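/- arXiv:2403.19720 — 5 statements merged into one kernel-verified Lean document; each statement's English description precedes it below -/
import Mathlib

section
/- In the random-effects single-task model described in the context, with β̃ = β_λ(Ω) = (XᵀX + nλΩ⁻¹)⁻¹Xᵀy the oracle generalized ridge estimator, the predictive risk satisfies E[(x_newᵀβ̃ − y_new)²] = σ² + (λ²/p)·tr(Σ(Σ̂ + λΩ⁻¹)⁻¹Ω⁻¹(Σ̂ + λΩ⁻¹)⁻¹) − (λσ²/n)·tr(Σ(Σ̂ + λΩ⁻¹)⁻¹Ω⁻¹(Σ̂ + λΩ⁻¹)⁻¹) + (σ²/n)·tr(Σ(Σ̂ + λΩ⁻¹)⁻¹). -/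
open Matrix MeasureTheory ProbabilityTheory

noncomputable def quadFam (n p : ℕ) : Fin 4 → Type :=
  ![Fin p → ℝ, Fin n → ℝ, Fin p → ℝ, ℝ]

noncomputable def quadFamMeas (n p : ℕ) : ∀ i, MeasurableSpace (quadFam n p i) :=
  Fin.cons (inferInstance : MeasurableSpace (Fin p → ℝ))
    (Fin.cons (inferInstance : MeasurableSpace (Fin n → ℝ))
      (Fin.cons (inferInstance : MeasurableSpace (Fin p → ℝ))
        (Fin.cons (inferInstance : MeasurableSpace ℝ) finZeroElim)))

/-- The four random elements `(β̄, ε, x_new, ε_new)` bundled as a dependent family. -/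
def quadFun {W : Type*} {n p : ℕ} (B : W → Fin p → ℝ) (E : W → Fin n → ℝ)
    (xnew : W → Fin p → ℝ) (enew : W → ℝ) : ∀ i, W → quadFam n p i :=
  Fin.cons B (Fin.cons E (Fin.cons xnew (Fin.cons enew finZeroElim)))

/-! The prediction error of a linear estimator `L y` is `x_newᵀ z - ε_new` with
`z = (LX - I) β̄ + L ε`, and `z` is independent of `x_new`, while `(x_new, z)` is independent of
`ε_new`. So the risk is `tr(Σ E[z zᵀ]) + σ²`, and as `ε` is centred and independent of `β̄`,
`E[z zᵀ] = (LX - I)(Ω/p)(LX - I)ᵀ + σ² L Lᵀ`. For the oracle ridge estimator, with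
`M = Σ̂ + λΩ⁻¹`, we have `LX - I = -λ M⁻¹Ω⁻¹` and `L = M⁻¹Xᵀ/n`, and `XᵀX = n (M - λΩ⁻¹)` turns
`L Lᵀ` into `(M⁻¹ - λ M⁻¹Ω⁻¹M⁻¹)/n`. -/

section SecondMoment

variable {W ι κ : Type*} [MeasurableSpace W] {μ : Measure W}

noncomputable def secondMoment (μ : Measure W) (u : W → ι → ℝ) : Matrix ι ι ℝ :=
  Matrix.of fun i j => ∫ ω, u ω i * u ω j ∂μ

lemma secondMoment_apply (u : W → ι → ℝ) (i j : ι) :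
    secondMoment μ u i j = ∫ ω, u ω i * u ω j ∂μ := rfl

lemma secondMoment_apply_comm (u : W → ι → ℝ) (i j : ι) :
    secondMoment μ u i j = secondMoment μ u j i := by
  simp only [secondMoment_apply, mul_comm]

lemma integrable_mul_of_memLp_two {f g : W → ℝ} (hf : MemLp f 2 μ) (hg : MemLp g 2 μ) :
    Integrable (fun ω => f ω * g ω) μ :=
  hf.integrable_mul hg

lemma integral_sub_sq_of_indepFun [IsFiniteMeasure μ] {Y e : W → ℝ} (hY : MemLp Y 2 μ)
    (he : MemLp e 2 μ) (hYe : IndepFun Y e μ) (he0 : ∫ ω, e ω ∂μ = 0) :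
    ∫ ω, (Y ω - e ω) ^ 2 ∂μ = ∫ ω, Y ω ^ 2 ∂μ + ∫ ω, e ω ^ 2 ∂μ := by
  have hcross : ∫ ω, Y ω * e ω ∂μ = 0 := by
    rw [hYe.integral_fun_mul_eq_mul_integral hY.aestronglyMeasurable he.aestronglyMeasurable,
      he0, mul_zero]
  have hexp : ∀ ω, (Y ω - e ω) ^ 2 = (Y ω ^ 2 + e ω ^ 2) - 2 * (Y ω * e ω) := fun ω => by ring
  simp only [hexp]
  rw [integral_sub (hY.integrable_sq.fun_add he.integrable_sq)
      ((integrable_mul_of_memLp_two hY he).const_mul 2),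
    integral_add hY.integrable_sq he.integrable_sq, integral_const_mul, hcross, mul_zero, sub_zero]

variable {u v : W → ι → ℝ}

lemma secondMoment_add_of_indepFun [IsFiniteMeasure μ] (hu : ∀ i, MemLp (fun ω => u ω i) 2 μ)
    (hv : ∀ i, MemLp (fun ω => v ω i) 2 μ) (huv : IndepFun u v μ)
    (hv0 : ∀ i, ∫ ω, v ω i ∂μ = 0) :
    secondMoment μ (fun ω => u ω + v ω) = secondMoment μ u + secondMoment μ v := by
  have hcross : ∀ i j, ∫ ω, u ω i * v ω j ∂μ = 0 := fun i j => by
    have hij : IndepFun (fun ω => u ω i) (fun ω => v ω j) μ :=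
      huv.comp (measurable_pi_apply i) (measurable_pi_apply j)
    rw [hij.integral_fun_mul_eq_mul_integral (hu i).aestronglyMeasurable
      (hv j).aestronglyMeasurable, hv0, mul_zero]
  ext i j
  have hexp : ∀ ω, (u ω + v ω) i * (u ω + v ω) j
      = (u ω i * u ω j + u ω i * v ω j) + (u ω j * v ω i + v ω i * v ω j) := fun ω => by
    simp only [Pi.add_apply]; ring
  have hint := fun a b => integrable_mul_of_memLp_two (μ := μ) (hu a) (hv b)
  simp only [secondMoment_apply, hexp, Matrix.add_apply]
  rw [integral_add ((integrable_mul_of_memLp_two (hu i) (hu j)).fun_add (hint i j))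
      ((hint j i).fun_add (integrable_mul_of_memLp_two (hv i) (hv j))),
    integral_add (integrable_mul_of_memLp_two (hu i) (hu j)) (hint i j),
    integral_add (hint j i) (integrable_mul_of_memLp_two (hv i) (hv j)), hcross, hcross]
  ring

lemma ProbabilityTheory.IndepFun.apply_mul_apply (huv : IndepFun u v μ) (k l : ι) :
    IndepFun (fun ω => u ω k * u ω l) (fun ω => v ω k * v ω l) μ :=
  huv.comp ((measurable_pi_apply k).mul (measurable_pi_apply l))
    ((measurable_pi_apply k).mul (measurable_pi_apply l))

lemma integrable_mul_mul_of_indepFun (hu : ∀ i, MemLp (fun ω => u ω i) 2 μ)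
    (hv : ∀ i, MemLp (fun ω => v ω i) 2 μ) (huv : IndepFun u v μ) (k l : ι) :
    Integrable (fun ω => (u ω k * u ω l) * (v ω k * v ω l)) μ :=
  (huv.apply_mul_apply k l).integrable_mul
    (integrable_mul_of_memLp_two (hu k) (hu l)) (integrable_mul_of_memLp_two (hv k) (hv l))

variable [Fintype ι]

lemma memLp_two_mulVec (A : Matrix κ ι ℝ) (hu : ∀ i, MemLp (fun ω => u ω i) 2 μ) (k : κ) :
    MemLp (fun ω => (A *ᵥ u ω) k) 2 μ :=
  memLp_finsetSum _ fun i _ => (hu i).const_mul (A k i)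

lemma integral_mulVec_apply (A : Matrix κ ι ℝ) (hu : ∀ i, Integrable (fun ω => u ω i) μ) (k : κ) :
    ∫ ω, (A *ᵥ u ω) k ∂μ = (A *ᵥ fun i => ∫ ω, u ω i ∂μ) k := by
  simp only [mulVec, dotProduct]
  rw [integral_finsetSum _ fun i _ => (hu i).const_mul _]
  simp only [integral_const_mul]

lemma secondMoment_mulVec [Fintype κ] [IsFiniteMeasure μ] (A : Matrix κ ι ℝ)
    (hu : ∀ i, MemLp (fun ω => u ω i) 2 μ) :
    secondMoment μ (fun ω => A *ᵥ u ω) = A * secondMoment μ u * Aᵀ := by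
  ext k l
  have hexp : ∀ ω, (A *ᵥ u ω) k * (A *ᵥ u ω) l
      = ∑ i, ∑ j, (A k i * A l j) * (u ω i * u ω j) := fun ω => by
    simp only [mulVec, dotProduct, Finset.sum_mul_sum]
    exact Finset.sum_congr rfl fun i _ => Finset.sum_congr rfl fun j _ => by ring
  have hint : ∀ i j, Integrable (fun ω => (A k i * A l j) * (u ω i * u ω j)) μ := fun i j =>
    (integrable_mul_of_memLp_two (hu i) (hu j)).const_mul _
  simp only [secondMoment_apply, hexp, mul_apply, transpose_apply, Finset.sum_mul]
  rw [integral_finsetSum _ fun i _ => integrable_finsetSum _ fun j _ => hint i j, Finset.sum_comm]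
  refine Finset.sum_congr rfl fun j _ => ?_
  rw [integral_finsetSum _ fun i _ => hint j i]
  exact Finset.sum_congr rfl fun i _ => by rw [integral_const_mul]; ring

lemma secondMoment_mulVec_add_mulVec_of_indepFun [Fintype κ] [IsFiniteMeasure μ] {ι' : Type*}
    [Fintype ι'] {v : W → ι' → ℝ} (A : Matrix κ ι ℝ) (C : Matrix κ ι' ℝ)
    (hu : ∀ i, MemLp (fun ω => u ω i) 2 μ) (hv : ∀ i, MemLp (fun ω => v ω i) 2 μ)
    (huv : IndepFun u v μ) (hv0 : ∀ i, ∫ ω, v ω i ∂μ = 0) :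
    secondMoment μ (fun ω => A *ᵥ u ω + C *ᵥ v ω)
      = A * secondMoment μ u * Aᵀ + C * secondMoment μ v * Cᵀ := by
  have hCv0 : ∀ k, ∫ ω, (C *ᵥ v ω) k ∂μ = 0 := fun k => by
    rw [integral_mulVec_apply C (fun i => (hv i).integrable one_le_two)]
    simp only [hv0, ← Pi.zero_def, mulVec_zero, Pi.zero_apply]
  have hAC : IndepFun (fun ω => A *ᵥ u ω) (fun ω => C *ᵥ v ω) μ :=
    huv.comp (continuous_const.matrix_mulVec continuous_id).measurable
      (continuous_const.matrix_mulVec continuous_id).measurable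
  rw [secondMoment_add_of_indepFun (memLp_two_mulVec A hu) (memLp_two_mulVec C hv) hAC hCv0,
    secondMoment_mulVec A hu, secondMoment_mulVec C hv]

lemma dotProduct_sq_eq_sum (a b : ι → ℝ) :
    (a ⬝ᵥ b) ^ 2 = ∑ k, ∑ l, (a k * a l) * (b k * b l) := by
  simp only [sq, dotProduct, Finset.sum_mul_sum]
  exact Finset.sum_congr rfl fun k _ => Finset.sum_congr rfl fun l _ => by ring

lemma memLp_two_dotProduct_of_indepFun (hu : ∀ i, MemLp (fun ω => u ω i) 2 μ)
    (hv : ∀ i, MemLp (fun ω => v ω i) 2 μ) (huv : IndepFun u v μ) :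
    MemLp (fun ω => u ω ⬝ᵥ v ω) 2 μ := by
  have hmeas : AEStronglyMeasurable (fun ω => u ω ⬝ᵥ v ω) μ := by
    simp only [dotProduct]
    exact Finset.aestronglyMeasurable_fun_sum _ fun i _ =>
      (hu i).aestronglyMeasurable.mul (hv i).aestronglyMeasurable
  rw [memLp_two_iff_integrable_sq hmeas]
  simp only [dotProduct_sq_eq_sum]
  exact integrable_finsetSum _ fun k _ => integrable_finsetSum _ fun l _ =>
    integrable_mul_mul_of_indepFun hu hv huv k l

lemma integral_dotProduct_sq_of_indepFun (hu : ∀ i, MemLp (fun ω => u ω i) 2 μ)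
    (hv : ∀ i, MemLp (fun ω => v ω i) 2 μ) (huv : IndepFun u v μ) :
    ∫ ω, (u ω ⬝ᵥ v ω) ^ 2 ∂μ = trace (secondMoment μ u * secondMoment μ v) := by
  simp only [dotProduct_sq_eq_sum, trace, diag_apply, mul_apply]
  rw [integral_finsetSum _ fun k _ => integrable_finsetSum _ fun l _ =>
    integrable_mul_mul_of_indepFun hu hv huv k l]
  refine Finset.sum_congr rfl fun k _ => ?_
  rw [integral_finsetSum _ fun l _ => integrable_mul_mul_of_indepFun hu hv huv k l]
  refine Finset.sum_congr rfl fun l _ => ?_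
  rw [secondMoment_apply_comm v l k]
  exact (huv.apply_mul_apply k l).integral_fun_mul_eq_mul_integral
    (integrable_mul_of_memLp_two (hu k) (hu l)).aestronglyMeasurable
    (integrable_mul_of_memLp_two (hv k) (hv l)).aestronglyMeasurable

lemma integral_dotProduct_sub_sq_of_indepFun [IsFiniteMeasure μ] {e : W → ℝ}
    (hu : ∀ i, MemLp (fun ω => u ω i) 2 μ) (hv : ∀ i, MemLp (fun ω => v ω i) 2 μ)
    (he : MemLp e 2 μ) (huv : IndepFun u v μ) (hUe : IndepFun (fun ω => u ω ⬝ᵥ v ω) e μ)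
    (he0 : ∫ ω, e ω ∂μ = 0) :
    ∫ ω, (u ω ⬝ᵥ v ω - e ω) ^ 2 ∂μ
      = trace (secondMoment μ u * secondMoment μ v) + ∫ ω, e ω ^ 2 ∂μ := by
  rw [integral_sub_sq_of_indepFun (memLp_two_dotProduct_of_indepFun hu hv huv) he hUe he0,
    integral_dotProduct_sq_of_indepFun hu hv huv]

end SecondMoment

lemma ProbabilityTheory.iIndepFun.indepFun_prodMk₃ {Ω ι : Type*} [DecidableEq ι]
    {mΩ : MeasurableSpace Ω} {μ : Measure Ω} {β : ι → Type*} {m : ∀ i, MeasurableSpace (β i)}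
    {f : ∀ i, Ω → β i} (hf : iIndepFun f μ) (hmeas : ∀ i, Measurable (f i)) (i j k l : ι)
    (hil : i ≠ l) (hjl : j ≠ l) (hkl : k ≠ l) :
    IndepFun (fun ω => (f i ω, f j ω, f k ω)) (f l) μ := by
  have hdisj : Disjoint ({i, j, k} : Finset ι) {l} := by simp [hil.symm, hjl.symm, hkl.symm]
  have h := hf.indepFun_finset _ _ hdisj hmeas
  let φ : (∀ s : ({i, j, k} : Finset ι), β s) → β i × β j × β k :=
    fun g => (g ⟨i, by simp⟩, g ⟨j, by simp⟩, g ⟨k, by simp⟩)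
  have hφ : Measurable φ :=
    (measurable_pi_apply _).prodMk ((measurable_pi_apply _).prodMk (measurable_pi_apply _))
  exact h.comp hφ (measurable_pi_apply (⟨l, by simp⟩ : ({l} : Finset ι)))

section LinearPrediction

variable {W : Type*} [MeasurableSpace W] {μ : Measure W} {n p : ℕ} {B : W → Fin p → ℝ}
  {E : W → Fin n → ℝ} {xnew : W → Fin p → ℝ} {enew : W → ℝ}

lemma measurable_quadFun (hB : Measurable B) (hE : Measurable E) (hx : Measurable xnew)
    (he : Measurable enew) (i : Fin 4) :
    @Measurable W (quadFam n p i) _ (quadFamMeas n p i) (quadFun B E xnew enew i) := by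
  fin_cases i <;> assumption

lemma linear_prediction_error_eq (X : Matrix (Fin n) (Fin p) ℝ) (L : Matrix (Fin p) (Fin n) ℝ)
    (x b : Fin p → ℝ) (e : Fin n → ℝ) (ε : ℝ) :
    x ⬝ᵥ L *ᵥ (X *ᵥ b + e) - (x ⬝ᵥ b + ε) = x ⬝ᵥ ((L * X - 1) *ᵥ b + L *ᵥ e) - ε := by
  simp only [sub_mulVec, one_mulVec, mulVec_add, mulVec_mulVec, dotProduct_add, dotProduct_sub]
  ring

theorem integral_linear_prediction_error_sq [IsFiniteMeasure μ] (X : Matrix (Fin n) (Fin p) ℝ)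
    (L : Matrix (Fin p) (Fin n) ℝ) (hB : Measurable B) (hE : Measurable E)
    (hx : Measurable xnew) (he : Measurable enew) (hB2 : ∀ i, MemLp (fun ω => B ω i) 2 μ)
    (hE2 : ∀ i, MemLp (fun ω => E ω i) 2 μ) (hx2 : ∀ i, MemLp (fun ω => xnew ω i) 2 μ)
    (he2 : MemLp enew 2 μ) (hIndep : iIndepFun (m := quadFamMeas n p) (quadFun B E xnew enew) μ)
    (hEmean : ∀ i, ∫ ω, E ω i ∂μ = 0) (hemean : ∫ ω, enew ω ∂μ = 0) :
    ∫ ω, (xnew ω ⬝ᵥ L *ᵥ (X *ᵥ B ω + E ω) - (xnew ω ⬝ᵥ B ω + enew ω)) ^ 2 ∂μ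
      = trace (secondMoment μ xnew * ((L * X - 1) * secondMoment μ B * (L * X - 1)ᵀ
          + L * secondMoment μ E * Lᵀ)) + ∫ ω, enew ω ^ 2 ∂μ := by
  set z := fun ω => (L * X - 1) *ᵥ B ω + L *ᵥ E ω
  have hmeas := measurable_quadFun hB hE hx he
  have hBE : IndepFun B E μ := hIndep.indepFun (i := 0) (j := 1) (by decide)
  have hxBE : IndepFun xnew (fun ω => (B ω, E ω)) μ :=
    (hIndep.indepFun_prodMk hmeas 0 1 2 (by decide) (by decide)).symm
  have hxBEe : IndepFun (fun ω => (xnew ω, B ω, E ω)) enew μ :=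
    hIndep.indepFun_prodMk₃ hmeas 2 0 1 3 (by decide) (by decide) (by decide)
  have hzcont : Continuous fun be : (Fin p → ℝ) × (Fin n → ℝ) =>
      (L * X - 1) *ᵥ be.1 + L *ᵥ be.2 :=
    (continuous_const.matrix_mulVec continuous_fst).add
      (continuous_const.matrix_mulVec continuous_snd)
  have hxz : IndepFun xnew z μ := hxBE.comp measurable_id hzcont.measurable
  have hze : IndepFun (fun ω => xnew ω ⬝ᵥ z ω) enew μ :=
    hxBEe.comp (continuous_fst.dotProduct (hzcont.comp continuous_snd)).measurable measurable_id
  have hz2 : ∀ i, MemLp (fun ω => z ω i) 2 μ := fun i =>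
    (memLp_two_mulVec _ hB2 i).add (memLp_two_mulVec L hE2 i)
  simp only [linear_prediction_error_eq]
  rw [integral_dotProduct_sub_sq_of_indepFun hx2 hz2 he2 hxz hze hemean,
    secondMoment_mulVec_add_mulVec_of_indepFun _ L hB2 hE2 hBE hEmean]

end LinearPrediction

section RidgeAlgebra

variable {m k : Type*} [Fintype m] [Fintype k] {R : Matrix k k ℝ} {c lam : ℝ}

lemma posDef_smul_gram_add (X : Matrix m k ℝ) (hc : 0 ≤ c) (hR : R.PosDef) (hlam : 0 < lam) :
    (c • (Xᵀ * X) + lam • R).PosDef := by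
  have hgram : (Xᵀ * X).PosSemidef := by
    simpa [conjTranspose_eq_transpose_of_trivial] using posSemidef_conjTranspose_mul_self X
  exact PosDef.posSemidef_add (hgram.smul hc) (hR.smul hlam)

-- `M` stands for `Σ̂ + λR` with `Σ̂ = XᵀX / c`; this is what the hypothesis `hXM` records.
variable [DecidableEq k] {X : Matrix m k ℝ} {M : Matrix k k ℝ}

lemma ridge_inv_eq (hc : c ≠ 0) (hM : IsUnit M.det) (hXM : Xᵀ * X = c • (M - lam • R)) :
    (Xᵀ * X + (c * lam) • R)⁻¹ = c⁻¹ • M⁻¹ := by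
  have hcM : Xᵀ * X + (c * lam) • R = c • M := by
    rw [hXM, smul_sub, smul_smul, sub_add_cancel]
  rw [hcM]
  refine inv_eq_right_inv ?_
  rw [smul_mul_smul_comm, mul_inv_cancel₀ hc, mul_nonsing_inv M hM, one_smul]

lemma ridge_inv_mul_transpose (hc : c ≠ 0) (hM : IsUnit M.det)
    (hXM : Xᵀ * X = c • (M - lam • R)) :
    (Xᵀ * X + (c * lam) • R)⁻¹ * Xᵀ = c⁻¹ • (M⁻¹ * Xᵀ) := by
  rw [ridge_inv_eq hc hM hXM, Matrix.smul_mul]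

lemma ridge_inv_mul_transpose_mul_sub_one (hc : c ≠ 0) (hM : IsUnit M.det)
    (hXM : Xᵀ * X = c • (M - lam • R)) :
    (Xᵀ * X + (c * lam) • R)⁻¹ * Xᵀ * X - 1 = -lam • (M⁻¹ * R) := by
  rw [Matrix.mul_assoc, ridge_inv_eq hc hM hXM, hXM, smul_mul_smul_comm, inv_mul_cancel₀ hc,
    one_smul, Matrix.mul_sub, mul_smul_comm, nonsing_inv_mul M hM, neg_smul]
  abel

lemma ridge_error_covariance [DecidableEq m] (hc : c ≠ 0) (hM : IsUnit M.det) (hMT : M.IsSymm)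
    (hRT : R.IsSymm) (hXM : Xᵀ * X = c • (M - lam • R)) {Ω : Matrix k k ℝ} (hRΩ : R * Ω = 1)
    (s t : ℝ) :
    (-lam • (M⁻¹ * R)) * (s • Ω) * (-lam • (M⁻¹ * R))ᵀ
        + (c⁻¹ • (M⁻¹ * Xᵀ)) * (t • (1 : Matrix m m ℝ)) * (c⁻¹ • (M⁻¹ * Xᵀ))ᵀ
      = (s * lam ^ 2) • (M⁻¹ * R * M⁻¹) + (t / c) • (M⁻¹ - lam • (M⁻¹ * R * M⁻¹)) := by
  have hMiT : (M⁻¹)ᵀ = M⁻¹ := by rw [transpose_nonsing_inv, hMT.eq]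
  have hsignal : M⁻¹ * (R * (Ω * (R * M⁻¹))) = M⁻¹ * (R * M⁻¹) := by
    rw [← Matrix.mul_assoc R Ω, hRΩ, Matrix.one_mul]
  have hnoise : M⁻¹ * (Xᵀ * (X * M⁻¹)) = c • (M⁻¹ - lam • (M⁻¹ * (R * M⁻¹))) := by
    rw [← Matrix.mul_assoc Xᵀ, hXM, smul_mul_assoc, mul_smul_comm, Matrix.sub_mul, Matrix.mul_sub,
      ← Matrix.mul_assoc M⁻¹ M, nonsing_inv_mul M hM, Matrix.one_mul, smul_mul_assoc,
      mul_smul_comm]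
  simp only [transpose_smul, transpose_mul, transpose_transpose, hRT.eq, hMiT, Matrix.smul_mul,
    Matrix.mul_smul, Matrix.one_mul, Matrix.mul_assoc, hsignal, hnoise]
  match_scalars <;> field_simp

end RidgeAlgebra

theorem stmt_2_general
    {W : Type*} [MeasurableSpace W] (μ : Measure W) [IsProbabilityMeasure μ]
    (n p : ℕ) (hn : 0 < n)
    (X : Matrix (Fin n) (Fin p) ℝ)
    (Sg Om : Matrix (Fin p) (Fin p) ℝ) (hOm : Om.PosDef)
    (σ : ℝ) (lam : ℝ) (hlam : 0 < lam)
    (B : W → Fin p → ℝ) (E : W → Fin n → ℝ) (xnew : W → Fin p → ℝ) (enew : W → ℝ)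
    (hB : Measurable B) (hE : Measurable E) (hx : Measurable xnew) (he : Measurable enew)
    (hB2 : ∀ i, MemLp (fun ω => B ω i) 2 μ)
    (hE2 : ∀ i, MemLp (fun ω => E ω i) 2 μ)
    (hx2 : ∀ i, MemLp (fun ω => xnew ω i) 2 μ)
    (he2 : MemLp enew 2 μ)
    (hIndep : iIndepFun (m := quadFamMeas n p) (quadFun B E xnew enew) μ)
    (hBcov : ∀ i j, ∫ ω, B ω i * B ω j ∂μ = Om i j / p)
    (hEmean : ∀ i, ∫ ω, E ω i ∂μ = 0)
    (hEcov : ∀ i j, ∫ ω, E ω i * E ω j ∂μ = σ ^ 2 * (1 : Matrix (Fin n) (Fin n) ℝ) i j)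
    (hxcov : ∀ i j, ∫ ω, xnew ω i * xnew ω j ∂μ = Sg i j)
    (hemean : ∫ ω, enew ω ∂μ = 0)
    (hevar : ∫ ω, (enew ω) ^ 2 ∂μ = σ ^ 2) :
    ∫ ω, ((xnew ω) ⬝ᵥ ((Xᵀ * X + ((n : ℝ) * lam) • Om⁻¹)⁻¹.mulVec
          (Xᵀ.mulVec (X.mulVec (B ω) + E ω)))
        - ((xnew ω) ⬝ᵥ (B ω) + enew ω)) ^ 2 ∂μ =
      σ ^ 2
        + (lam ^ 2 / p) * Matrix.trace (Sg * ((n : ℝ)⁻¹ • (Xᵀ * X) + lam • Om⁻¹)⁻¹ * Om⁻¹ *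
            ((n : ℝ)⁻¹ • (Xᵀ * X) + lam • Om⁻¹)⁻¹)
        - (lam * σ ^ 2 / n) * Matrix.trace (Sg * ((n : ℝ)⁻¹ • (Xᵀ * X) + lam • Om⁻¹)⁻¹ * Om⁻¹ *
            ((n : ℝ)⁻¹ • (Xᵀ * X) + lam • Om⁻¹)⁻¹)
        + (σ ^ 2 / n) * Matrix.trace (Sg * ((n : ℝ)⁻¹ • (Xᵀ * X) + lam • Om⁻¹)⁻¹) := by
  have hn' : (n : ℝ) ≠ 0 := Nat.cast_ne_zero.mpr hn.ne'
  set M := (n : ℝ)⁻¹ • (Xᵀ * X) + lam • Om⁻¹ with hM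
  have hMpd : M.PosDef := posDef_smul_gram_add X (by positivity) hOm.inv hlam
  have hMdet : IsUnit M.det := (isUnit_iff_isUnit_det M).mp hMpd.isUnit
  have hXM : Xᵀ * X = (n : ℝ) • (M - lam • Om⁻¹) := by
    rw [hM, add_sub_cancel_right, smul_smul, mul_inv_cancel₀ hn', one_smul]
  have hxmom : secondMoment μ xnew = Sg := Matrix.ext hxcov
  have hBmom : secondMoment μ B = (p : ℝ)⁻¹ • Om := by
    ext i j
    rw [secondMoment_apply, hBcov, Matrix.smul_apply, smul_eq_mul, div_eq_inv_mul]
  have hEmom : secondMoment μ E = σ ^ 2 • 1 := by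
    ext i j
    rw [secondMoment_apply, hEcov, Matrix.smul_apply, smul_eq_mul]
  simp only [mulVec_mulVec]
  rw [integral_linear_prediction_error_sq X _ hB hE hx he hB2 hE2 hx2 he2 hIndep hEmean hemean,
    hxmom, hBmom, hEmom, hevar, ridge_inv_mul_transpose_mul_sub_one hn' hMdet hXM,
    ridge_inv_mul_transpose hn' hMdet hXM,
    ridge_error_covariance hn' hMdet (isHermitian_iff_isSymm.mp hMpd.isHermitian)
      (isHermitian_iff_isSymm.mp hOm.inv.isHermitian) hXM
      (nonsing_inv_mul Om hOm.det_pos.ne'.isUnit)]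
  simp only [Matrix.mul_add, Matrix.mul_sub, Matrix.mul_smul, trace_add, trace_sub, trace_smul,
    smul_eq_mul, Matrix.mul_assoc]
  ring

/-- in the random-effects single-task model with mutually independent
`β̄, ε, x_new, ε_new` (zero means, `E[β̄β̄ᵀ] = Ω/p`, `E[εεᵀ] = σ²I`, `E[x_new x_newᵀ] = Σ`,
`E[ε_new²] = σ²`), the predictive risk of the oracle generalized ridge estimator
`β̃ = (XᵀX + nλΩ⁻¹)⁻¹Xᵀy` (with `y = Xβ̄ + ε`, `y_new = x_newᵀβ̄ + ε_new`) equals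
`σ² + (λ²/p)·tr(Σ M⁻¹ Ω⁻¹ M⁻¹) − (λσ²/n)·tr(Σ M⁻¹ Ω⁻¹ M⁻¹) + (σ²/n)·tr(Σ M⁻¹)`
where `M = Σ̂ + λΩ⁻¹`, `Σ̂ = (1/n)XᵀX`. -/
theorem stmt_2
    {W : Type*} [MeasurableSpace W] (μ : Measure W) [IsProbabilityMeasure μ]
    (n p : ℕ) (hn : 0 < n) (hp : 0 < p)
    (X : Matrix (Fin n) (Fin p) ℝ)
    (Sg Om : Matrix (Fin p) (Fin p) ℝ) (hSg : Sg.PosDef) (hOm : Om.PosDef)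
    (σ : ℝ) (hσ : 0 ≤ σ) (lam : ℝ) (hlam : 0 < lam)
    (B : W → Fin p → ℝ) (E : W → Fin n → ℝ) (xnew : W → Fin p → ℝ) (enew : W → ℝ)
    (hB : Measurable B) (hE : Measurable E) (hx : Measurable xnew) (he : Measurable enew)
    (hB2 : ∀ i, MemLp (fun ω => B ω i) 2 μ)
    (hE2 : ∀ i, MemLp (fun ω => E ω i) 2 μ)
    (hx2 : ∀ i, MemLp (fun ω => xnew ω i) 2 μ)
    (he2 : MemLp enew 2 μ)
    (hIndep : iIndepFun (m := quadFamMeas n p) (quadFun B E xnew enew) μ)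
    (hBmean : ∀ i, ∫ ω, B ω i ∂μ = 0)
    (hBcov : ∀ i j, ∫ ω, B ω i * B ω j ∂μ = Om i j / p)
    (hEmean : ∀ i, ∫ ω, E ω i ∂μ = 0)
    (hEcov : ∀ i j, ∫ ω, E ω i * E ω j ∂μ = σ ^ 2 * (1 : Matrix (Fin n) (Fin n) ℝ) i j)
    (hxcov : ∀ i j, ∫ ω, xnew ω i * xnew ω j ∂μ = Sg i j)
    (hemean : ∫ ω, enew ω ∂μ = 0)
    (hevar : ∫ ω, (enew ω) ^ 2 ∂μ = σ ^ 2) :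
    ∫ ω, ((xnew ω) ⬝ᵥ ((Xᵀ * X + ((n : ℝ) * lam) • Om⁻¹)⁻¹.mulVec
          (Xᵀ.mulVec (X.mulVec (B ω) + E ω)))
        - ((xnew ω) ⬝ᵥ (B ω) + enew ω)) ^ 2 ∂μ =
      σ ^ 2
        + (lam ^ 2 / p) * Matrix.trace (Sg * ((n : ℝ)⁻¹ • (Xᵀ * X) + lam • Om⁻¹)⁻¹ * Om⁻¹ *
            ((n : ℝ)⁻¹ • (Xᵀ * X) + lam • Om⁻¹)⁻¹)
        - (lam * σ ^ 2 / n) * Matrix.trace (Sg * ((n : ℝ)⁻¹ • (Xᵀ * X) + lam • Om⁻¹)⁻¹ * Om⁻¹ *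
            ((n : ℝ)⁻¹ • (Xᵀ * X) + lam • Om⁻¹)⁻¹)
        + (σ ^ 2 / n) * Matrix.trace (Sg * ((n : ℝ)⁻¹ • (Xᵀ * X) + lam • Om⁻¹)⁻¹) :=
  stmt_2_general μ n p hn X Sg Om hOm σ lam hlam B E xnew enew hB hE hx he hB2 hE2 hx2 he2 hIndep
    hBcov hEmean hEcov hxcov hemean hevar
end

section
/- Let Σ̂ be a real symmetric positive semidefinite p×p matrix, let Ω and Ω̂ be real symmetric positive definite p×p matrices with positive semidefinite square roots Ω^{1/2} and Ω̂^{1/2}, let Σ be any real p×p matrix, and let λ > 0. Then λ·|tr(Σ(Σ̂ + λΩ̂⁻¹)⁻¹(Ω̂⁻¹ − Ω⁻¹)(Σ̂ + λΩ⁻¹)⁻¹)| ≤ (p/λ)·‖Σ‖·‖Ω̂⁻¹ − Ω⁻¹‖·‖Ω̂^{1/2}‖²·‖Ω^{1/2}‖², where ‖·‖ denotes the ℓ²-operator norm on matrices. -/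
/-!
The trace is bounded by `p` times the operator norm, and each resolvent factor has norm at
most `‖Ω^{1/2}‖² / λ`: writing `Σ̂ + λΩ⁻¹ = Ω^{-1/2} (Ω^{1/2} Σ̂ Ω^{1/2} + λ) Ω^{-1/2}`, the
middle factor is at least `λ` in the quadratic-form sense, so its inverse has norm at most
`1 / λ`.
-/

open Matrix
open scoped Matrix.Norms.L2Operator ComplexOrder

/-- The ℓ²-operator norm (spectral norm) of a real matrix, i.e. the operator norm of the
induced linear map between Euclidean spaces. -/
noncomputable def opNorm {m n : ℕ} (A : Matrix (Fin m) (Fin n) ℝ) : ℝ :=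
  ‖LinearMap.toContinuousLinearMap (Matrix.toEuclideanLin A)‖

theorem mul_norm_le_norm_of_le_re_inner {𝕜 E : Type*} [RCLike 𝕜] [NormedAddCommGroup E]
    [InnerProductSpace 𝕜 E] {f : E → E} {c : ℝ}
    (hf : ∀ x, c * ‖x‖ ^ 2 ≤ RCLike.re (inner 𝕜 x (f x))) (x : E) : c * ‖x‖ ≤ ‖f x‖ := by
  have h := (hf x).trans (re_inner_le_norm x (f x))
  rcases (norm_nonneg x).eq_or_lt with hx | hx
  · simp [← hx]
  · nlinarith

lemma opNorm_eq_l2_opNorm {m n : ℕ} (A : Matrix (Fin m) (Fin n) ℝ) : opNorm A = ‖A‖ := rfl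

namespace Matrix

variable {n 𝕜 : Type*} [Fintype n] [DecidableEq n] [RCLike 𝕜]

theorem norm_apply_self_le_l2_opNorm (M : Matrix n n 𝕜) (i : n) : ‖M i i‖ ≤ ‖M‖ := by
  let e := EuclideanSpace.single i (1 : 𝕜)
  calc ‖M i i‖ = ‖inner 𝕜 e (toEuclideanCLM (𝕜 := 𝕜) M e)‖ := by
        simp [e, EuclideanSpace.inner_single_left, mulVec, dotProduct]
    _ ≤ ‖e‖ * ‖toEuclideanCLM (𝕜 := 𝕜) M e‖ := norm_inner_le_norm _ _
    _ ≤ ‖M‖ := by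
        simpa [e, l2_opNorm_toEuclideanCLM] using (toEuclideanCLM (𝕜 := 𝕜) M).le_opNorm e

theorem norm_trace_le_card_mul_l2_opNorm (M : Matrix n n 𝕜) :
    ‖M.trace‖ ≤ Fintype.card n * ‖M‖ :=
  calc ‖M.trace‖ ≤ ∑ i, ‖M i i‖ := norm_sum_le _ _
    _ ≤ ∑ _i : n, ‖M‖ := Finset.sum_le_sum fun i _ => M.norm_apply_self_le_l2_opNorm i
    _ = Fintype.card n * ‖M‖ := by simp

theorem PosSemidef.le_re_inner_add_smul_one {P : Matrix n n 𝕜} (hP : P.PosSemidef) (c : ℝ)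
    (x : EuclideanSpace 𝕜 n) :
    c * ‖x‖ ^ 2 ≤ RCLike.re (inner 𝕜 x (toEuclideanCLM (𝕜 := 𝕜) (P + c • 1) x)) := by
  have hPx := (isPositive_toEuclideanLin_iff.2 hP).re_inner_nonneg_right x
  rw [RCLike.real_smul_eq_coe_smul (K := 𝕜), map_add, map_smul, map_one, _root_.add_apply,
    _root_.smul_apply, one_apply_eq_self, inner_add_right, inner_smul_real_right, map_add,
    RCLike.smul_re, inner_self_eq_norm_sq]
  exact le_add_of_nonneg_left hPx

theorem PosSemidef.l2_opNorm_inv_add_smul_one_le {P : Matrix n n 𝕜} (hP : P.PosSemidef)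
    {c : ℝ} (hc : 0 < c) : ‖(P + c • (1 : Matrix n n 𝕜))⁻¹‖ ≤ c⁻¹ := by
  set M := P + c • (1 : Matrix n n 𝕜)
  have hM : IsUnit M.det :=
    (isUnit_iff_isUnit_det M).1 (PosDef.posSemidef_add hP (PosDef.one.smul hc)).isUnit
  refine ContinuousLinearMap.opNorm_le_bound _ (by positivity) fun x => ?_
  have h := mul_norm_le_norm_of_le_re_inner (hP.le_re_inner_add_smul_one c)
    (toEuclideanCLM (𝕜 := 𝕜) M⁻¹ x)
  rw [← mul_apply_eq_comp, ← map_mul, mul_nonsing_inv _ hM, map_one] at h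
  rw [inv_mul_eq_div, le_div_iff₀' hc]
  exact h

theorem PosSemidef.l2_opNorm_inv_add_smul_inv_mul_self_le {A S : Matrix n n 𝕜}
    (hA : A.PosSemidef) (hS : S.IsHermitian) (hSu : IsUnit S) {c : ℝ} (hc : 0 < c) :
    ‖(A + c • (S * S)⁻¹)⁻¹‖ ≤ ‖S‖ ^ 2 / c := by
  have hdet : IsUnit S.det := (isUnit_iff_isUnit_det S).1 hSu
  have hSAS : (S * A * S).PosSemidef := by
    simpa [hS.eq] using hA.conjTranspose_mul_mul_same S
  have hconj : A + c • (S * S)⁻¹ = S⁻¹ * (S * A * S + c • 1) * S⁻¹ := by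
    simp only [Matrix.mul_inv_rev, Matrix.mul_add, Matrix.add_mul, Matrix.mul_smul,
      Matrix.smul_mul, Matrix.mul_one, ← Matrix.mul_assoc, nonsing_inv_mul _ hdet, Matrix.one_mul]
    simp only [Matrix.mul_assoc, mul_nonsing_inv _ hdet, Matrix.mul_one]
  rw [hconj, Matrix.mul_inv_rev, Matrix.mul_inv_rev, nonsing_inv_nonsing_inv _ hdet,
    ← Matrix.mul_assoc]
  calc _ ≤ ‖S‖ * c⁻¹ * ‖S‖ := norm_mul_le_of_le
        (norm_mul_le_of_le le_rfl (hSAS.l2_opNorm_inv_add_smul_one_le hc)) le_rfl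
    _ = ‖S‖ ^ 2 / c := by ring

end Matrix

/-- with `Σ̂` positive semidefinite, `Ω, Ω̂` positive definite with positive
semidefinite square roots `S = Ω^{1/2}`, `T = Ω̂^{1/2}`, and `λ > 0`:
`λ·|tr(Σ(Σ̂ + λΩ̂⁻¹)⁻¹(Ω̂⁻¹ − Ω⁻¹)(Σ̂ + λΩ⁻¹)⁻¹)|
   ≤ (p/λ)·‖Σ‖·‖Ω̂⁻¹ − Ω⁻¹‖·‖Ω̂^{1/2}‖²·‖Ω^{1/2}‖²`. -/
theorem stmt_5 (p : ℕ) (Shat Om Omh Sg S T : Matrix (Fin p) (Fin p) ℝ)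
    (hShat : Shat.PosSemidef) (hOm : Om.PosDef) (hOmh : Omh.PosDef)
    (hS : S.PosSemidef) (hSsq : S * S = Om)
    (hT : T.PosSemidef) (hTsq : T * T = Omh)
    (lam : ℝ) (hlam : 0 < lam) :
    lam * |Matrix.trace (Sg * (Shat + lam • Omh⁻¹)⁻¹ * (Omh⁻¹ - Om⁻¹) *
        (Shat + lam • Om⁻¹)⁻¹)| ≤
      ((p : ℝ) / lam) * opNorm Sg * opNorm (Omh⁻¹ - Om⁻¹) * opNorm T ^ 2 * opNorm S ^ 2 := by
  subst hSsq hTsq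
  have hA := hShat.l2_opNorm_inv_add_smul_inv_mul_self_le hS.isHermitian
    (isUnit_of_mul_isUnit_left hOm.isUnit) hlam
  have hB := hShat.l2_opNorm_inv_add_smul_inv_mul_self_le hT.isHermitian
    (isUnit_of_mul_isUnit_left hOmh.isUnit) hlam
  have htrace (M : Matrix (Fin p) (Fin p) ℝ) : |M.trace| ≤ p * ‖M‖ := by
    simpa using norm_trace_le_card_mul_l2_opNorm M
  simp only [opNorm_eq_l2_opNorm]
  calc _ ≤ lam * (p * (‖Sg‖ * (‖T‖ ^ 2 / lam) * ‖(T * T)⁻¹ - (S * S)⁻¹‖ * (‖S‖ ^ 2 / lam))) := by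
        gcongr
        exact (htrace _).trans (by gcongr; exact norm_mul_le_of_le (norm_mul_le_of_le
          (norm_mul_le_of_le le_rfl hB) le_rfl) hA)
    _ = _ := by field_simp
end

section
/- Fix positive integers n and p, a real n×p matrix X with Σ̂ = (1/n)XᵀX, a real symmetric positive definite p×p matrix Σ, a real symmetric positive definite p×p matrix Ω, σ > 0 and c > 0, and set λ = c·p·σ²/n. For a real symmetric positive definite p×p matrix Q, define the predictive risk R(Q) = σ² + (λ²/p)·tr(Ω Q⁻¹(Σ̂ + λQ⁻¹)⁻¹Σ(Σ̂ + λQ⁻¹)⁻¹Q⁻¹) − (λσ²/n)·tr((Σ̂ + λQ⁻¹)⁻¹Σ(Σ̂ + λQ⁻¹)⁻¹Q⁻¹) + (σ²/n)·tr(Σ(Σ̂ + λQ⁻¹)⁻¹). Then R is minimized over the set of symmetric positive definite matrices at Q* = cΩ: for every symmetric positive definite Q, R(cΩ) ≤ R(Q), and the minimal value is R(cΩ) = σ² + (σ²/n)·tr(Σ(Σ̂ + (pσ²/n)Ω⁻¹)⁻¹). -/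
open Matrix

set_option linter.unusedSectionVars false
set_option maxHeartbeats 1000000

/-- The predictive risk `R(Q)` of the generalized ridge regression estimator with weight
matrix `Q`, in the random-effects linear model with data covariance `Σ`, hyper-covariance `Ω`
of the random coefficients and noise variance `σ²`:
`R(Q) = σ² + (λ²/p)·tr(Ω Q⁻¹(Σ̂ + λQ⁻¹)⁻¹Σ(Σ̂ + λQ⁻¹)⁻¹Q⁻¹)
      − (λσ²/n)·tr((Σ̂ + λQ⁻¹)⁻¹Σ(Σ̂ + λQ⁻¹)⁻¹Q⁻¹) + (σ²/n)·tr(Σ(Σ̂ + λQ⁻¹)⁻¹)`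
with `Σ̂ = (1/n)XᵀX`. -/
noncomputable def predRisk (n p : ℕ) (X : Matrix (Fin n) (Fin p) ℝ)
    (Sg Om : Matrix (Fin p) (Fin p) ℝ) (σ lam : ℝ)
    (Q : Matrix (Fin p) (Fin p) ℝ) : ℝ :=
  σ ^ 2
    + (lam ^ 2 / p) * Matrix.trace (Om * Q⁻¹ * ((n : ℝ)⁻¹ • (Xᵀ * X) + lam • Q⁻¹)⁻¹ * Sg *
        ((n : ℝ)⁻¹ • (Xᵀ * X) + lam • Q⁻¹)⁻¹ * Q⁻¹)
    - (lam * σ ^ 2 / n) * Matrix.trace (((n : ℝ)⁻¹ • (Xᵀ * X) + lam • Q⁻¹)⁻¹ * Sg *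
        ((n : ℝ)⁻¹ • (Xᵀ * X) + lam • Q⁻¹)⁻¹ * Q⁻¹)
    + (σ ^ 2 / n) * Matrix.trace (Sg * ((n : ℝ)⁻¹ • (Xᵀ * X) + lam • Q⁻¹)⁻¹)


section Aux
variable {m : Type*} [Fintype m] [DecidableEq m]

lemma pd_smul {A : Matrix m m ℝ} (hA : A.PosDef) {a : ℝ} (ha : 0 < a) :
    (a • A).PosDef := by
  refine Matrix.PosDef.of_dotProduct_mulVec_pos ?_ (fun x hx => ?_)
  · unfold Matrix.IsHermitian
    rw [conjTranspose_smul, hA.1]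
    simp
  · rw [smul_mulVec, dotProduct_smul]
    exact mul_pos ha (hA.dotProduct_mulVec_pos hx)

lemma trace_nonneg_of_psd {A : Matrix m m ℝ} (hA : A.PosSemidef) : 0 ≤ A.trace := by
  rw [Matrix.trace]
  refine Finset.sum_nonneg fun i _ => ?_
  have := hA.dotProduct_mulVec_nonneg (Pi.single i 1)
  simpa [dotProduct, Matrix.mulVec, Pi.single_apply, Matrix.diag] using this

open scoped MatrixOrder in
lemma trace_mul_nonneg' {A B : Matrix m m ℝ} (hA : A.PosSemidef) (hB : B.PosSemidef) :
    0 ≤ (A * B).trace := by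
  obtain ⟨C, rfl⟩ : ∃ C : Matrix m m ℝ, A = Cᴴ * C := by
    obtain ⟨X, hX, -, hXA⟩ :=
      CFC.exists_sqrt_of_isSelfAdjoint_of_quasispectrumRestricts hA.isHermitian
        (QuasispectrumRestricts.nnreal_of_nonneg hA.nonneg)
    refine ⟨X, ?_⟩
    rw [← hXA]
    exact congrArg (· * X) hX.star_eq.symm
  rw [Matrix.mul_assoc, Matrix.trace_mul_comm]
  exact trace_nonneg_of_psd (by simpa [Matrix.mul_assoc] using hB.mul_mul_conjTranspose_same C)

lemma psd_smul {A : Matrix m m ℝ} (hA : A.PosSemidef) {a : ℝ} (ha : 0 ≤ a) :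
    (a • A).PosSemidef := by
  refine Matrix.PosSemidef.of_dotProduct_mulVec_nonneg ?_ (fun x => ?_)
  · unfold Matrix.IsHermitian
    rw [conjTranspose_smul, hA.1]
    simp
  · rw [smul_mulVec, dotProduct_smul]
    exact mul_nonneg ha (hA.dotProduct_mulVec_nonneg x)

lemma expand_aux (D M Z : Matrix m m ℝ) (lam : ℝ) :
    D * (M - lam • Z) * D = D * M * D - lam • (D * Z * D) := by
  rw [Matrix.mul_sub, Matrix.mul_smul, Matrix.sub_mul, Matrix.smul_mul]

lemma key {B Sg M Q : Matrix m m ℝ} (hB : B.PosSemidef) (hSg : Sg.PosDef)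
    (hM : M.PosDef) (hQ : Q.PosDef) {lam : ℝ} (hlam : 0 < lam) :
    (Sg * (B + lam • M⁻¹)⁻¹).trace ≤
      ((B + lam • Q⁻¹)⁻¹ * Sg * (B + lam • Q⁻¹)⁻¹ * (B + lam • (Q⁻¹ * M * Q⁻¹))).trace := by
  have hQi : Q⁻¹.PosDef := hQ.inv
  have hMi : M⁻¹.PosDef := hM.inv
  set AQ := B + lam • Q⁻¹ with hAQdef
  set AM := B + lam • M⁻¹ with hAMdef
  set D := M⁻¹ - Q⁻¹ with hDdef
  have hAQ : AQ.PosDef := Matrix.PosDef.posSemidef_add hB (pd_smul hQi hlam)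
  have hAM : AM.PosDef := Matrix.PosDef.posSemidef_add hB (pd_smul hMi hlam)
  have hAQd : IsUnit AQ.det := (Matrix.isUnit_iff_isUnit_det AQ).mp hAQ.isUnit
  have hAMd : IsUnit AM.det := (Matrix.isUnit_iff_isUnit_det AM).mp hAM.isUnit
  have hMd : IsUnit M.det := (Matrix.isUnit_iff_isUnit_det M).mp hM.isUnit
  have eQ1 : AQ⁻¹ * AQ = 1 := Matrix.nonsing_inv_mul _ hAQd
  have eQ2 : AQ * AQ⁻¹ = 1 := Matrix.mul_nonsing_inv _ hAQd
  have eM1 : AM⁻¹ * AM = 1 := Matrix.nonsing_inv_mul _ hAMd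
  have eM2 : AM * AM⁻¹ = 1 := Matrix.mul_nonsing_inv _ hAMd
  have mM1 : M⁻¹ * M = 1 := Matrix.nonsing_inv_mul _ hMd
  have mM2 : M * M⁻¹ = 1 := Matrix.mul_nonsing_inv _ hMd
  -- I1
  have hDMD : D * M * D = M⁻¹ - Q⁻¹ - Q⁻¹ + Q⁻¹ * M * Q⁻¹ := by
    have h1 : D * M = 1 - Q⁻¹ * M := by
      rw [hDdef, Matrix.sub_mul, mM1]
    rw [h1, Matrix.sub_mul, Matrix.one_mul, hDdef, Matrix.mul_sub,
      Matrix.mul_assoc Q⁻¹ M M⁻¹, mM2, Matrix.mul_one]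
    abel
  have I1 : B + lam • (Q⁻¹ * M * Q⁻¹) = AQ + AQ - AM + lam • (D * M * D) := by
    rw [hDMD, hAQdef, hAMdef]
    simp only [smul_sub, smul_add]
    abel
  -- factorizations of F
  have hAMQ : AM - AQ = lam • D := by
    rw [hAQdef, hAMdef, hDdef, smul_sub]; abel
  have hF1 : AQ⁻¹ - AM⁻¹ = lam • (AQ⁻¹ * D * AM⁻¹) := by
    have h : AQ⁻¹ * (AM - AQ) * AM⁻¹ = AQ⁻¹ - AM⁻¹ := by
      rw [Matrix.mul_sub, Matrix.sub_mul, Matrix.mul_assoc AQ⁻¹ AM AM⁻¹, eM2, Matrix.mul_one,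
        eQ1, Matrix.one_mul]
    rw [← h, hAMQ, Matrix.mul_smul, Matrix.smul_mul]
  have hF2 : AQ⁻¹ - AM⁻¹ = lam • (AM⁻¹ * D * AQ⁻¹) := by
    have h : AM⁻¹ * (AM - AQ) * AQ⁻¹ = AQ⁻¹ - AM⁻¹ := by
      rw [Matrix.mul_sub, Matrix.sub_mul, eM1, Matrix.one_mul,
        Matrix.mul_assoc AM⁻¹ AQ AQ⁻¹, eQ2, Matrix.mul_one]
    rw [← h, hAMQ, Matrix.mul_smul, Matrix.smul_mul]
  -- I3 : trace of S*AM
  have hFAMF1 : (AQ⁻¹ - AM⁻¹) * AM * (AQ⁻¹ - AM⁻¹)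
      = AQ⁻¹ * AM * AQ⁻¹ - AQ⁻¹ - AQ⁻¹ + AM⁻¹ := by
    rw [Matrix.sub_mul, eM1, Matrix.mul_sub, Matrix.sub_mul, Matrix.sub_mul,
      Matrix.mul_assoc AQ⁻¹ AM AM⁻¹, eM2, Matrix.mul_one, Matrix.one_mul, Matrix.one_mul]
    abel
  -- helper cancellation lemmas
  have eM1' : ∀ (Z : Matrix m m ℝ), AM⁻¹ * (AM * Z) = Z := fun Z => by
    rw [← Matrix.mul_assoc, eM1, Matrix.one_mul]
  have eM2' : ∀ (Z : Matrix m m ℝ), AM * (AM⁻¹ * Z) = Z := fun Z => by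
    rw [← Matrix.mul_assoc, eM2, Matrix.one_mul]
  have mM1' : ∀ (Z : Matrix m m ℝ), M⁻¹ * (M * Z) = Z := fun Z => by
    rw [← Matrix.mul_assoc, mM1, Matrix.one_mul]
  have mM2' : ∀ (Z : Matrix m m ℝ), M * (M⁻¹ * Z) = Z := fun Z => by
    rw [← Matrix.mul_assoc, mM2, Matrix.one_mul]
  have eQ1' : ∀ (Z : Matrix m m ℝ), AQ⁻¹ * (AQ * Z) = Z := fun Z => by
    rw [← Matrix.mul_assoc, eQ1, Matrix.one_mul]
  -- cyclic trace helpers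
  have c1 : (Sg * (AQ⁻¹ * AM * AQ⁻¹)).trace = (AQ⁻¹ * Sg * AQ⁻¹ * AM).trace := by
    rw [show Sg * (AQ⁻¹ * AM * AQ⁻¹) = (Sg * AQ⁻¹ * AM) * AQ⁻¹ by noncomm_ring,
      Matrix.trace_mul_comm,
      show AQ⁻¹ * (Sg * AQ⁻¹ * AM) = AQ⁻¹ * Sg * AQ⁻¹ * AM by noncomm_ring]
  -- I3
  have I3 : (AQ⁻¹ * Sg * AQ⁻¹ * AM).trace
      = 2 * (Sg * AQ⁻¹).trace - (Sg * AM⁻¹).trace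
        + lam ^ 2 * (AQ⁻¹ * Sg * AQ⁻¹ * (D * AM⁻¹ * D)).trace := by
    have way1 : (Sg * ((AQ⁻¹ - AM⁻¹) * AM * (AQ⁻¹ - AM⁻¹))).trace
        = (AQ⁻¹ * Sg * AQ⁻¹ * AM).trace - 2 * (Sg * AQ⁻¹).trace + (Sg * AM⁻¹).trace := by
      rw [hFAMF1, Matrix.mul_add, Matrix.mul_sub, Matrix.mul_sub, trace_add, trace_sub,
        trace_sub, c1]
      ring
    have hprod : (AQ⁻¹ - AM⁻¹) * AM * (AQ⁻¹ - AM⁻¹)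
        = (lam • (AQ⁻¹ * D * AM⁻¹)) * AM * (lam • (AM⁻¹ * D * AQ⁻¹)) := by
      rw [← hF1, ← hF2]
    have hprod2 : (lam • (AQ⁻¹ * D * AM⁻¹)) * AM * (lam • (AM⁻¹ * D * AQ⁻¹))
        = (lam * lam) • (AQ⁻¹ * D * (AM⁻¹ * D * AQ⁻¹)) := by
      rw [Matrix.smul_mul, Matrix.smul_mul, Matrix.mul_smul, smul_smul]
      congr 1
      rw [Matrix.mul_assoc (AQ⁻¹ * D) AM⁻¹ AM, eM1, Matrix.mul_one, Matrix.mul_assoc]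
    have way2 : (Sg * ((AQ⁻¹ - AM⁻¹) * AM * (AQ⁻¹ - AM⁻¹))).trace
        = lam ^ 2 * (AQ⁻¹ * Sg * AQ⁻¹ * (D * AM⁻¹ * D)).trace := by
      rw [hprod, hprod2, Matrix.mul_smul, trace_smul, smul_eq_mul,
        show Sg * (AQ⁻¹ * D * (AM⁻¹ * D * AQ⁻¹)) = (Sg * AQ⁻¹ * (D * AM⁻¹ * D)) * AQ⁻¹
          by noncomm_ring,
        Matrix.trace_mul_comm,
        show AQ⁻¹ * (Sg * AQ⁻¹ * (D * AM⁻¹ * D)) = AQ⁻¹ * Sg * AQ⁻¹ * (D * AM⁻¹ * D)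
          by noncomm_ring]
      ring
    linarith [way1.symm.trans way2]
  -- I5
  have hW : AM * M * AM - lam • AM = B * M * B + lam • B := by
    rw [hAMdef]
    simp only [Matrix.add_mul, Matrix.mul_add, Matrix.smul_mul, Matrix.mul_smul, smul_add,
      smul_sub, smul_smul, Matrix.mul_assoc, mM1', mM2', mM1, mM2, Matrix.mul_one,
      Matrix.one_mul, neg_one_smul]
    abel
  have hMW : M - lam • AM⁻¹ = AM⁻¹ * (B * M * B + lam • B) * AM⁻¹ := by
    rw [← hW]
    simp only [Matrix.mul_sub, Matrix.sub_mul, Matrix.mul_smul, Matrix.smul_mul,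
      Matrix.mul_assoc, eM1', eM2', eM1, eM2, Matrix.mul_one, Matrix.one_mul]
  -- trace of S * AQ
  have tSAQ : (AQ⁻¹ * Sg * AQ⁻¹ * AQ).trace = (Sg * AQ⁻¹).trace := by
    rw [Matrix.mul_assoc (AQ⁻¹ * Sg) AQ⁻¹ AQ, eQ1, Matrix.mul_one, Matrix.trace_mul_comm]
  -- main identity
  have main : (AQ⁻¹ * Sg * AQ⁻¹ * (B + lam • (Q⁻¹ * M * Q⁻¹))).trace
      = (Sg * AM⁻¹).trace
        + lam * (AQ⁻¹ * Sg * AQ⁻¹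
            * (D * (AM⁻¹ * (B * M * B + lam • B) * AM⁻¹) * D)).trace := by
    rw [← hMW, I1, expand_aux]
    simp only [Matrix.mul_add, Matrix.mul_sub, Matrix.mul_smul, trace_add, trace_sub,
      trace_smul, smul_eq_mul]
    rw [tSAQ, I3]
    ring
  rw [main]
  have hS : (AQ⁻¹ * Sg * AQ⁻¹).PosSemidef := by
    have h := hSg.posSemidef.conjTranspose_mul_mul_same AQ⁻¹
    rwa [hAQ.inv.isHermitian.eq] at h
  have hBMB : (B * M * B).PosSemidef := by
    have h := hM.posSemidef.conjTranspose_mul_mul_same B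
    rwa [hB.isHermitian.eq] at h
  have hinner : (B * M * B + lam • B).PosSemidef := hBMB.add (psd_smul hB hlam.le)
  have hWpsd : (AM⁻¹ * (B * M * B + lam • B) * AM⁻¹).PosSemidef := by
    have h := hinner.conjTranspose_mul_mul_same AM⁻¹
    rwa [hAM.inv.isHermitian.eq] at h
  have hDh : Dᴴ = D := (hMi.isHermitian.sub hQi.isHermitian).eq
  have hT : (D * (AM⁻¹ * (B * M * B + lam • B) * AM⁻¹) * D).PosSemidef := by
    have h := hWpsd.conjTranspose_mul_mul_same D
    rwa [hDh] at h
  have hpos : 0 ≤ (AQ⁻¹ * Sg * AQ⁻¹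
      * (D * (AM⁻¹ * (B * M * B + lam • B) * AM⁻¹) * D)).trace :=
    trace_mul_nonneg' hS hT
  nlinarith [mul_nonneg hlam.le hpos]

end Aux

lemma risk_rewrite (n p : ℕ) (hn : 0 < n) (hp : 0 < p) (X : Matrix (Fin n) (Fin p) ℝ)
    (Sg Om : Matrix (Fin p) (Fin p) ℝ) (σ c : ℝ) (hσ : 0 < σ) (hc : 0 < c)
    (Q : Matrix (Fin p) (Fin p) ℝ) (hQ : Q.PosDef) :
    predRisk n p X Sg Om σ (c * p * σ ^ 2 / n) Q = σ ^ 2 + (σ ^ 2 / n) *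
      ((((n : ℝ)⁻¹ • (Xᵀ * X) + (c * p * σ ^ 2 / n) • Q⁻¹)⁻¹ * Sg *
        ((n : ℝ)⁻¹ • (Xᵀ * X) + (c * p * σ ^ 2 / n) • Q⁻¹)⁻¹ *
        ((n : ℝ)⁻¹ • (Xᵀ * X) + (c * p * σ ^ 2 / n) • (Q⁻¹ * (c • Om) * Q⁻¹)))).trace := by
  have hn' : (0:ℝ) < n := by exact_mod_cast hn
  have hp' : (0:ℝ) < p := by exact_mod_cast hp
  set lam : ℝ := c * p * σ ^ 2 / n with hlamdef
  have hlam : 0 < lam := by positivity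
  set B : Matrix (Fin p) (Fin p) ℝ := (n : ℝ)⁻¹ • (Xᵀ * X) with hBdef
  set AQ := B + lam • Q⁻¹ with hAQdef
  have hB : B.PosSemidef := by
    have h := Matrix.posSemidef_conjTranspose_mul_self X
    rw [conjTranspose_eq_transpose_of_trivial] at h
    exact psd_smul h (by positivity)
  have hQi : Q⁻¹.PosDef := hQ.inv
  have hAQ : AQ.PosDef := Matrix.PosDef.posSemidef_add hB (pd_smul hQi hlam)
  have hAQd : IsUnit AQ.det := (Matrix.isUnit_iff_isUnit_det AQ).mp hAQ.isUnit
  have eQ1 : AQ⁻¹ * AQ = 1 := Matrix.nonsing_inv_mul _ hAQd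
  -- cyclic identity for the Om-term
  have t1 : (AQ⁻¹ * Sg * AQ⁻¹ * (Q⁻¹ * (c • Om) * Q⁻¹)).trace
      = c * (Om * Q⁻¹ * AQ⁻¹ * Sg * AQ⁻¹ * Q⁻¹).trace := by
    have h1 : Q⁻¹ * (c • Om) * Q⁻¹ = c • (Q⁻¹ * Om * Q⁻¹) := by
      rw [Matrix.mul_smul, Matrix.smul_mul]
    rw [h1, Matrix.mul_smul, trace_smul, smul_eq_mul]
    congr 1
    rw [show AQ⁻¹ * Sg * AQ⁻¹ * (Q⁻¹ * Om * Q⁻¹)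
        = (AQ⁻¹ * Sg * AQ⁻¹ * Q⁻¹) * (Om * Q⁻¹) by noncomm_ring,
      Matrix.trace_mul_comm,
      show Om * Q⁻¹ * (AQ⁻¹ * Sg * AQ⁻¹ * Q⁻¹) = Om * Q⁻¹ * AQ⁻¹ * Sg * AQ⁻¹ * Q⁻¹
        by noncomm_ring]
  have t2 : lam * (AQ⁻¹ * Sg * AQ⁻¹ * Q⁻¹).trace
      = (Sg * AQ⁻¹).trace - (AQ⁻¹ * Sg * AQ⁻¹ * B).trace := by
    have h1 : AQ⁻¹ * Sg * AQ⁻¹ * (lam • Q⁻¹) = AQ⁻¹ * Sg - AQ⁻¹ * Sg * AQ⁻¹ * B := by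
      have h2 : (lam • Q⁻¹ : Matrix (Fin p) (Fin p) ℝ) = AQ - B := by
        rw [hAQdef]; abel
      rw [h2, Matrix.mul_sub, Matrix.mul_assoc (AQ⁻¹ * Sg) AQ⁻¹ AQ, eQ1, Matrix.mul_one]
    have h3 := congrArg Matrix.trace h1
    rw [Matrix.mul_smul, trace_smul, smul_eq_mul, trace_sub] at h3
    rw [h3, Matrix.trace_mul_comm Sg AQ⁻¹]
  have hco : lam ^ 2 / p = lam * c * σ ^ 2 / n := by
    rw [hlamdef]; field_simp
  show σ ^ 2 + (lam ^ 2 / ↑p) * (Om * Q⁻¹ * AQ⁻¹ * Sg * AQ⁻¹ * Q⁻¹).trace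
      - (lam * σ ^ 2 / ↑n) * (AQ⁻¹ * Sg * AQ⁻¹ * Q⁻¹).trace
      + (σ ^ 2 / ↑n) * (Sg * AQ⁻¹).trace
      = σ ^ 2 + (σ ^ 2 / ↑n) * (AQ⁻¹ * Sg * AQ⁻¹ * (B + lam • (Q⁻¹ * (c • Om) * Q⁻¹))).trace
  rw [Matrix.mul_add, trace_add,
    show AQ⁻¹ * Sg * AQ⁻¹ * (lam • (Q⁻¹ * (c • Om) * Q⁻¹))
        = lam • (AQ⁻¹ * Sg * AQ⁻¹ * (Q⁻¹ * (c • Om) * Q⁻¹)) from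
      Matrix.mul_smul _ _ _,
    trace_smul, smul_eq_mul, t1]
  linear_combination (-(σ ^ 2 / (n:ℝ))) * t2
    + (Om * Q⁻¹ * AQ⁻¹ * Sg * AQ⁻¹ * Q⁻¹).trace * hco


/-- with `λ = c·p·σ²/n`, the predictive risk of generalized ridge regression is
minimized over symmetric positive definite weight matrices at `Q* = cΩ`, and the minimal value
is `σ² + (σ²/n)·tr(Σ(Σ̂ + (pσ²/n)Ω⁻¹)⁻¹)`. -/
theorem stmt_7 (n p : ℕ) (hn : 0 < n) (hp : 0 < p)
    (X : Matrix (Fin n) (Fin p) ℝ)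
    (Sg Om : Matrix (Fin p) (Fin p) ℝ) (hSg : Sg.PosDef) (hOm : Om.PosDef)
    (σ : ℝ) (hσ : 0 < σ) (c : ℝ) (hc : 0 < c) :
    (∀ Q : Matrix (Fin p) (Fin p) ℝ, Q.PosDef →
      predRisk n p X Sg Om σ (c * p * σ ^ 2 / n) (c • Om) ≤
        predRisk n p X Sg Om σ (c * p * σ ^ 2 / n) Q) ∧
    predRisk n p X Sg Om σ (c * p * σ ^ 2 / n) (c • Om) =
      σ ^ 2 + (σ ^ 2 / n) *
        Matrix.trace (Sg * ((n : ℝ)⁻¹ • (Xᵀ * X) + ((p : ℝ) * σ ^ 2 / n) • Om⁻¹)⁻¹) := by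
  have hn' : (0:ℝ) < n := by exact_mod_cast hn
  have hp' : (0:ℝ) < p := by exact_mod_cast hp
  set lam : ℝ := c * p * σ ^ 2 / n with hlamdef
  have hlam : 0 < lam := by positivity
  set B : Matrix (Fin p) (Fin p) ℝ := (n : ℝ)⁻¹ • (Xᵀ * X) with hBdef
  have hB : B.PosSemidef := by
    have h := Matrix.posSemidef_conjTranspose_mul_self X
    rw [conjTranspose_eq_transpose_of_trivial] at h
    exact psd_smul h (by positivity)
  have hM : (c • Om).PosDef := pd_smul hOm hc
  have hMd : IsUnit (c • Om).det := (Matrix.isUnit_iff_isUnit_det _).mp hM.isUnit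
  have hOmd : IsUnit Om.det := (Matrix.isUnit_iff_isUnit_det _).mp hOm.isUnit
  have hMinv : (c • Om)⁻¹ = c⁻¹ • Om⁻¹ :=
    Matrix.inv_eq_left_inv (by
      rw [Matrix.smul_mul, Matrix.mul_smul, smul_smul, Matrix.nonsing_inv_mul _ hOmd,
        inv_mul_cancel₀ hc.ne', one_smul])
  set AQ := B + lam • (c • Om)⁻¹ with hAQdef
  have hAQ : AQ.PosDef := Matrix.PosDef.posSemidef_add hB (pd_smul hM.inv hlam)
  have hAQd : IsUnit AQ.det := (Matrix.isUnit_iff_isUnit_det AQ).mp hAQ.isUnit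
  have eQ1 : AQ⁻¹ * AQ = 1 := Matrix.nonsing_inv_mul _ hAQd
  have hval : predRisk n p X Sg Om σ lam (c • Om)
      = σ ^ 2 + (σ ^ 2 / n) * (Sg * AQ⁻¹).trace := by
    rw [risk_rewrite n p hn hp X Sg Om σ c hσ hc (c • Om) hM]
    have hQQ : (c • Om)⁻¹ * (c • Om) * (c • Om)⁻¹ = (c • Om)⁻¹ := by
      rw [Matrix.nonsing_inv_mul _ hMd, Matrix.one_mul]
    rw [hQQ]
    congr 2
    rw [Matrix.mul_assoc (AQ⁻¹ * Sg) AQ⁻¹ AQ, eQ1, Matrix.mul_one, Matrix.trace_mul_comm]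
  constructor
  · intro Q hQ
    rw [hval, risk_rewrite n p hn hp X Sg Om σ c hσ hc Q hQ]
    have hineq := key hB hSg hM hQ hlam
    have hcoef : (0:ℝ) ≤ σ ^ 2 / n := by positivity
    exact add_le_add_right (mul_le_mul_of_nonneg_left hineq hcoef) _
  · rw [hval]
    have hfold : lam • ((c • Om)⁻¹ : Matrix (Fin p) (Fin p) ℝ)
        = ((p : ℝ) * σ ^ 2 / n) • Om⁻¹ := by
      rw [hMinv, smul_smul]
      congr 1
      rw [hlamdef]
      field_simp
    rw [hAQdef, hfold]
end

section
/- Fix positive integers p, L, and L₀ ≤ L; for each ℓ = 1,…,L fix a positive integer n_ℓ, a real n_ℓ×p matrix X^{(ℓ)}, and a vector y^{(ℓ)} ∈ ℝ^{n_ℓ}; fix σ ≥ 0. For a real symmetric p×p matrix M define G(M) = −(4/(pL))·Σ_{ℓ=1}^{L} X^{(ℓ)ᵀ}(y^{(ℓ)}y^{(ℓ)ᵀ} − (1/p)X^{(ℓ)}MX^{(ℓ)ᵀ} − σ²I)X^{(ℓ)}. Suppose Ω and Ω̂ are real symmetric p×p matrices with G(Ω̂) = 0, and suppose d > 0 is such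 that the smallest eigenvalue of (1/n_ℓ)X^{(ℓ)ᵀ}X^{(ℓ)} is at least d for every ℓ = 1,…,L₀. Then (4L₀/L)·(min_{1≤ℓ≤L} n_ℓ²/p²)·d²·‖Ω − Ω̂‖_F² ≤ ‖G(Ω)‖_F·‖Ω − Ω̂‖_F. -/
open Matrix

/-- The Frobenius norm of a real matrix. -/
noncomputable def frobNorm {a b : ℕ} (M : Matrix (Fin a) (Fin b) ℝ) : ℝ :=
  Real.sqrt (∑ i, ∑ j, M i j ^ 2)

/-- The (Riemannian) gradient of the least-squares objective
`f(M) = (1/L)·Σ_ℓ ‖y^{(ℓ)}y^{(ℓ)ᵀ} − (1/p)X^{(ℓ)}MX^{(ℓ)ᵀ} − σ²I‖_F²`, namely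
`G(M) = −(4/(pL))·Σ_ℓ X^{(ℓ)ᵀ}(y^{(ℓ)}y^{(ℓ)ᵀ} − (1/p)X^{(ℓ)}MX^{(ℓ)ᵀ} − σ²I)X^{(ℓ)}`. -/
noncomputable def gradG (p L : ℕ) (n : Fin L → ℕ)
    (X : ∀ ℓ, Matrix (Fin (n ℓ)) (Fin p) ℝ) (y : ∀ ℓ, Fin (n ℓ) → ℝ) (σ : ℝ)
    (M : Matrix (Fin p) (Fin p) ℝ) : Matrix (Fin p) (Fin p) ℝ :=
  (-(4 / ((p : ℝ) * L))) •
    ∑ ℓ, (X ℓ)ᵀ * (Matrix.vecMulVec (y ℓ) (y ℓ) - (p : ℝ)⁻¹ • (X ℓ * M * (X ℓ)ᵀ) - σ ^ 2 • 1) *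
      X ℓ

/- ## Auxiliary lemmas -/

lemma psd_trace_nonneg {p : ℕ} {P : Matrix (Fin p) (Fin p) ℝ} (h : P.PosSemidef) :
    0 ≤ P.trace := by
  rw [Matrix.trace]
  refine Finset.sum_nonneg fun i _ => ?_
  have := h.dotProduct_mulVec_nonneg (Pi.single i 1)
  simpa [dotProduct, Matrix.mulVec, Pi.single_apply, Finset.mul_sum] using this

lemma trace_mul_psd_nonneg {p : ℕ} {P Q : Matrix (Fin p) (Fin p) ℝ}
    (hP : P.PosSemidef) (hQ : Q.PosSemidef) : 0 ≤ (P * Q).trace := by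
  obtain ⟨B, rfl⟩ : ∃ B : Matrix (Fin p) (Fin p) ℝ, P = Bᴴ * B := by
    open MatrixOrder in
    exact ⟨CFC.sqrt P, by
      have h0 : 0 ≤ P := Matrix.nonneg_iff_posSemidef.mpr hP
      have hs : (CFC.sqrt P)ᴴ = CFC.sqrt P := (CFC.sqrt_nonneg P).isSelfAdjoint
      rw [hs, CFC.sqrt_mul_sqrt_self P h0]⟩
  have : (Bᴴ * B * Q).trace = (B * Q * Bᴴ).trace := (Matrix.trace_mul_cycle B Q Bᴴ).symm
  rw [this]
  exact psd_trace_nonneg ((hQ.mul_mul_conjTranspose_same B))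

lemma psd_XtX {a p : ℕ} (X : Matrix (Fin a) (Fin p) ℝ) : (Xᵀ * X).PosSemidef := by
  have := Matrix.posSemidef_conjTranspose_mul_self X
  rwa [Matrix.conjTranspose_eq_transpose_of_trivial] at this

lemma psd_sandwich {p : ℕ} {B : Matrix (Fin p) (Fin p) ℝ} (hB : B.PosSemidef)
    {Δ : Matrix (Fin p) (Fin p) ℝ} (hΔ : Δ.IsSymm) : (Δ * B * Δ).PosSemidef := by
  have := hB.conjTranspose_mul_mul_same Δ
  rwa [Matrix.conjTranspose_eq_transpose_of_trivial, hΔ.eq] at this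

lemma psd_sq {p : ℕ} {Δ : Matrix (Fin p) (Fin p) ℝ} (hΔ : Δ.IsSymm) : (Δ * Δ).PosSemidef := by
  have := Matrix.posSemidef_conjTranspose_mul_self Δ
  rwa [Matrix.conjTranspose_eq_transpose_of_trivial, hΔ.eq] at this

lemma trace_quad_lower {p : ℕ} {A Δ : Matrix (Fin p) (Fin p) ℝ} {c : ℝ} (hc : 0 ≤ c)
    (hAc : (A - c • 1).PosSemidef) (hΔ : Δ.IsSymm) :
    c ^ 2 * (Δ * Δ).trace ≤ (A * Δ * (A * Δ)).trace := by
  set B := A - c • (1 : Matrix (Fin p) (Fin p) ℝ) with hBdef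
  have hA : A = B + c • 1 := by rw [hBdef, sub_add_cancel]
  have hexp : A * Δ * (A * Δ) =
      B * (Δ * B * Δ) + c • (B * (Δ * Δ)) + c • (Δ * B * Δ) + c ^ 2 • (Δ * Δ) := by
    rw [hA]
    simp only [Matrix.add_mul, Matrix.mul_add, Matrix.smul_mul, Matrix.mul_smul,
      Matrix.one_mul, Matrix.mul_one, smul_smul, Matrix.mul_assoc]
    module
  rw [hexp]
  simp only [Matrix.trace_add, Matrix.trace_smul, smul_eq_mul]
  have h1 : 0 ≤ (B * (Δ * B * Δ)).trace := by
    have := trace_mul_psd_nonneg hAc (psd_sandwich hAc hΔ)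
    simpa [Matrix.mul_assoc] using this
  have h2 : 0 ≤ (B * (Δ * Δ)).trace := trace_mul_psd_nonneg hAc (psd_sq hΔ)
  have h3 : 0 ≤ (Δ * B * Δ).trace := psd_trace_nonneg (psd_sandwich hAc hΔ)
  nlinarith [mul_nonneg hc h2, mul_nonneg hc h3]

lemma finner_le_frob {a b : ℕ} (M N : Matrix (Fin a) (Fin b) ℝ) :
    ∑ i, ∑ j, M i j * N i j ≤ frobNorm M * frobNorm N := by
  have h := Real.sum_mul_le_sqrt_mul_sqrt (Finset.univ : Finset (Fin a × Fin b))
    (fun x => M x.1 x.2) (fun x => N x.1 x.2)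
  simpa [frobNorm, Fintype.sum_prod_type] using h

lemma frob_sq {a b : ℕ} (M : Matrix (Fin a) (Fin b) ℝ) :
    frobNorm M ^ 2 = ∑ i, ∑ j, M i j ^ 2 := by
  rw [frobNorm, Real.sq_sqrt]
  exact Finset.sum_nonneg fun i _ => Finset.sum_nonneg fun j _ => sq_nonneg _

lemma finner_eq_trace {a : ℕ} (M N : Matrix (Fin a) (Fin a) ℝ) :
    ∑ i, ∑ j, M i j * N i j = (M * Nᵀ).trace := by
  simp [Matrix.trace, Matrix.mul_apply, Matrix.diag]

lemma gradG_sub (p L : ℕ) (n : Fin L → ℕ)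
    (X : ∀ ℓ, Matrix (Fin (n ℓ)) (Fin p) ℝ) (y : ∀ ℓ, Fin (n ℓ) → ℝ) (σ : ℝ)
    (Om Omh : Matrix (Fin p) (Fin p) ℝ) (hp : (p:ℝ) ≠ 0) (hL : (L:ℝ) ≠ 0) :
    gradG p L n X y σ Om - gradG p L n X y σ Omh =
      ((4:ℝ) / ((p:ℝ)^2 * L)) •
        ∑ ℓ, ((X ℓ)ᵀ * X ℓ) * ((Om - Omh) * ((X ℓ)ᵀ * X ℓ)) := by
  simp only [gradG]
  rw [← smul_sub, ← Finset.sum_sub_distrib]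
  have hterm : ∀ ℓ : Fin L,
      (X ℓ)ᵀ * (Matrix.vecMulVec (y ℓ) (y ℓ) - (p : ℝ)⁻¹ • (X ℓ * Om * (X ℓ)ᵀ) - σ ^ 2 • 1) * X ℓ
        - (X ℓ)ᵀ * (Matrix.vecMulVec (y ℓ) (y ℓ) - (p : ℝ)⁻¹ • (X ℓ * Omh * (X ℓ)ᵀ) - σ ^ 2 • 1) * X ℓ
      = (-(p:ℝ)⁻¹) • (((X ℓ)ᵀ * X ℓ) * ((Om - Omh) * ((X ℓ)ᵀ * X ℓ))) := by
    intro ℓ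
    rw [← Matrix.sub_mul, ← Matrix.mul_sub]
    have h2 : (Matrix.vecMulVec (y ℓ) (y ℓ) - (p : ℝ)⁻¹ • (X ℓ * Om * (X ℓ)ᵀ) - σ ^ 2 • 1)
        - (Matrix.vecMulVec (y ℓ) (y ℓ) - (p : ℝ)⁻¹ • (X ℓ * Omh * (X ℓ)ᵀ) - σ ^ 2 • 1)
        = (-(p:ℝ)⁻¹) • (X ℓ * ((Om - Omh) * (X ℓ)ᵀ)) := by
      simp only [Matrix.mul_sub, Matrix.sub_mul, Matrix.mul_assoc]
      module
    rw [h2]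
    simp only [Matrix.mul_smul, Matrix.smul_mul, Matrix.mul_assoc]
  rw [Finset.sum_congr rfl (fun ℓ _ => hterm ℓ), ← Finset.smul_sum, smul_smul]
  congr 1
  field_simp

/-- if `Ω̂` is a stationary point of the least-squares objective (`G(Ω̂) = 0`) and
for the first `L₀` tasks the smallest eigenvalue of `(1/n_ℓ)X^{(ℓ)ᵀ}X^{(ℓ)}` is at least
`d > 0` (stated as a quadratic-form lower bound), then
`(4L₀/L)·(min_ℓ n_ℓ²/p²)·d²·‖Ω − Ω̂‖_F² ≤ ‖G(Ω)‖_F·‖Ω − Ω̂‖_F`. -/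
theorem stmt_10 (p L L₀ : ℕ) (hp : 0 < p) (hL₀ : 0 < L₀) (hL : L₀ ≤ L)
    (n : Fin L → ℕ) (hn : ∀ ℓ, 0 < n ℓ)
    (X : ∀ ℓ, Matrix (Fin (n ℓ)) (Fin p) ℝ) (y : ∀ ℓ, Fin (n ℓ) → ℝ)
    (σ : ℝ) (hσ : 0 ≤ σ)
    (Om Omh : Matrix (Fin p) (Fin p) ℝ) (hOm : Om.IsSymm) (hOmh : Omh.IsSymm)
    (hstat : gradG p L n X y σ Omh = 0)
    (d : ℝ) (hd : 0 < d)
    (heig : ∀ ℓ : Fin L, (ℓ : ℕ) < L₀ → ∀ v : Fin p → ℝ,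
      d * (v ⬝ᵥ v) ≤ v ⬝ᵥ ((n ℓ : ℝ)⁻¹ • ((X ℓ)ᵀ * X ℓ)).mulVec v) :
    (4 * L₀ / L) * (⨅ ℓ : Fin L, (n ℓ : ℝ) ^ 2 / (p : ℝ) ^ 2) * d ^ 2 *
        frobNorm (Om - Omh) ^ 2 ≤
      frobNorm (gradG p L n X y σ Om) * frobNorm (Om - Omh) := by
  have hpR : (p:ℝ) ≠ 0 := Nat.cast_ne_zero.mpr hp.ne'
  have hLpos : 0 < L := lt_of_lt_of_le hL₀ hL
  have hLR : (L:ℝ) ≠ 0 := Nat.cast_ne_zero.mpr hLpos.ne'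
  set Δ := Om - Omh with hΔdef
  have hΔ : Δ.IsSymm := hOm.sub hOmh
  set A : Fin L → Matrix (Fin p) (Fin p) ℝ := fun ℓ => (X ℓ)ᵀ * X ℓ with hAdef
  have hG : gradG p L n X y σ Om =
      ((4:ℝ) / ((p:ℝ)^2 * L)) • ∑ ℓ, A ℓ * (Δ * A ℓ) := by
    have h := gradG_sub p L n X y σ Om Omh hpR hLR
    rw [hstat, sub_zero] at h
    exact h
  set K := ∑ i, ∑ j, Δ i j ^ 2 with hKdef
  have hK : frobNorm Δ ^ 2 = K := frob_sq Δ
  have hKnn : 0 ≤ K :=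
    Finset.sum_nonneg fun i _ => Finset.sum_nonneg fun j _ => sq_nonneg _
  have hKtr : (Δ * Δ).trace = K := by
    have := finner_eq_trace Δ Δ
    rw [hΔ.eq] at this
    rw [← this, hKdef]
    exact Finset.sum_congr rfl fun i _ => Finset.sum_congr rfl fun j _ => (sq (Δ i j)).symm
  -- the Frobenius inner product of the gradient with Δ
  have hCS : ∑ i, ∑ j, (gradG p L n X y σ Om) i j * Δ i j ≤
      frobNorm (gradG p L n X y σ Om) * frobNorm Δ := finner_le_frob _ _
  have hS : ∑ i, ∑ j, (gradG p L n X y σ Om) i j * Δ i j =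
      ((4:ℝ) / ((p:ℝ)^2 * L)) * ∑ ℓ, (A ℓ * Δ * (A ℓ * Δ)).trace := by
    rw [finner_eq_trace, hG, hΔ.eq]
    rw [Matrix.smul_mul, Matrix.trace_smul, smul_eq_mul]
    congr 1
    rw [Matrix.sum_mul, Matrix.trace_sum]
    exact Finset.sum_congr rfl fun ℓ _ => by simp only [hAdef, Matrix.mul_assoc]
  have hnn : ∀ ℓ : Fin L, 0 ≤ (A ℓ * Δ * (A ℓ * Δ)).trace := by
    intro ℓ
    have := trace_mul_psd_nonneg (psd_XtX (X ℓ)) (psd_sandwich (psd_XtX (X ℓ)) hΔ)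
    simpa [hAdef, Matrix.mul_assoc] using this
  -- lower bound for the first L₀ tasks
  have hbound : ∀ ℓ : Fin L, (ℓ : ℕ) < L₀ →
      ((n ℓ : ℝ) * d) ^ 2 * K ≤ (A ℓ * Δ * (A ℓ * Δ)).trace := by
    intro ℓ hℓ
    have hnR : (0:ℝ) < (n ℓ : ℝ) := by exact_mod_cast hn ℓ
    have hc : (0:ℝ) ≤ (n ℓ : ℝ) * d := le_of_lt (mul_pos hnR hd)
    have hpsd : (A ℓ - ((n ℓ : ℝ) * d) • 1).PosSemidef := by
      refine Matrix.PosSemidef.of_dotProduct_mulVec_nonneg ?_ ?_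
      · have h1 : (A ℓ).IsHermitian := (psd_XtX (X ℓ)).1
        have h2 : (((n ℓ : ℝ) * d) • (1 : Matrix (Fin p) (Fin p) ℝ)).IsHermitian := by
          simp [Matrix.IsHermitian]
        exact h1.sub h2
      · intro v
        have h := heig ℓ hℓ v
        rw [Matrix.smul_mulVec, dotProduct_smul, smul_eq_mul] at h
        have h' : (n ℓ : ℝ) * d * (v ⬝ᵥ v) ≤ v ⬝ᵥ (A ℓ).mulVec v := by
          have h2 := mul_le_mul_of_nonneg_left h (le_of_lt hnR)
          have h3 : (n ℓ : ℝ) * ((n ℓ : ℝ)⁻¹ * (v ⬝ᵥ ((X ℓ)ᵀ * X ℓ).mulVec v)) =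
              v ⬝ᵥ ((X ℓ)ᵀ * X ℓ).mulVec v := by field_simp
          rw [h3] at h2
          calc (n ℓ : ℝ) * d * (v ⬝ᵥ v) = (n ℓ : ℝ) * (d * (v ⬝ᵥ v)) := by ring
            _ ≤ v ⬝ᵥ ((X ℓ)ᵀ * X ℓ).mulVec v := h2
        have hsv : star v = v := by
          funext i; simp
        rw [hsv, Matrix.sub_mulVec, dotProduct_sub, Matrix.smul_mulVec,
          Matrix.one_mulVec, dotProduct_smul, smul_eq_mul]
        linarith
    have := trace_quad_lower hc hpsd hΔ
    rwa [hKtr] at this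
  -- sum over the first L₀ tasks
  set S₀ : Finset (Fin L) := Finset.univ.filter (fun ℓ : Fin L => (ℓ : ℕ) < L₀) with hS₀def
  have hcard : S₀.card = L₀ := by
    rw [show L₀ = (Finset.range L₀).card from (Finset.card_range L₀).symm]
    apply Finset.card_nbij (fun ℓ : Fin L => (ℓ : ℕ))
    · intro a ha
      have ha' : a ∈ S₀ := ha
      simp only [hS₀def, Finset.mem_filter] at ha'
      simpa using ha'.2
    · intro a _ b _ hab
      exact Fin.val_injective hab
    · intro b hb
      simp only [Finset.coe_range, Set.mem_Iio] at hb
      refine ⟨⟨b, lt_of_lt_of_le hb hL⟩, ?_, rfl⟩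
      simp [hS₀def, hb]
  set m := ⨅ ℓ : Fin L, (n ℓ : ℝ) ^ 2 / (p : ℝ) ^ 2 with hmdef
  have hne : Nonempty (Fin L) := Fin.pos_iff_nonempty.mp hLpos
  have hmle : ∀ ℓ : Fin L, (p:ℝ)^2 * m ≤ (n ℓ : ℝ)^2 := by
    intro ℓ
    have hb : BddBelow (Set.range fun ℓ : Fin L => (n ℓ : ℝ) ^ 2 / (p : ℝ) ^ 2) :=
      (Set.finite_range _).bddBelow
    have := ciInf_le hb ℓ
    have hp2 : (0:ℝ) < (p:ℝ)^2 := by positivity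
    calc (p:ℝ)^2 * m ≤ (p:ℝ)^2 * ((n ℓ : ℝ) ^ 2 / (p : ℝ) ^ 2) :=
          mul_le_mul_of_nonneg_left this (le_of_lt hp2)
      _ = (n ℓ : ℝ)^2 := by field_simp
  have hsum : (L₀ : ℝ) * ((p:ℝ)^2 * m * d^2 * K) ≤ ∑ ℓ, (A ℓ * Δ * (A ℓ * Δ)).trace := by
    have h1 : ∑ _ℓ ∈ S₀, ((p:ℝ)^2 * m * d^2 * K) ≤
        ∑ ℓ ∈ S₀, ((n ℓ : ℝ) * d) ^ 2 * K := by
      refine Finset.sum_le_sum fun ℓ hℓ => ?_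
      have := hmle ℓ
      have hdK : 0 ≤ d^2 * K := mul_nonneg (sq_nonneg d) hKnn
      calc (p:ℝ)^2 * m * d^2 * K = ((p:ℝ)^2 * m) * (d^2 * K) := by ring
        _ ≤ (n ℓ : ℝ)^2 * (d^2 * K) := mul_le_mul_of_nonneg_right this hdK
        _ = ((n ℓ : ℝ) * d) ^ 2 * K := by ring
    have h2 : ∑ ℓ ∈ S₀, ((n ℓ : ℝ) * d) ^ 2 * K ≤
        ∑ ℓ ∈ S₀, (A ℓ * Δ * (A ℓ * Δ)).trace := by
      refine Finset.sum_le_sum fun ℓ hℓ => ?_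
      simp only [hS₀def, Finset.mem_filter] at hℓ
      exact hbound ℓ hℓ.2
    have h3 : ∑ ℓ ∈ S₀, (A ℓ * Δ * (A ℓ * Δ)).trace ≤
        ∑ ℓ, (A ℓ * Δ * (A ℓ * Δ)).trace :=
      Finset.sum_le_sum_of_subset_of_nonneg (Finset.subset_univ _)
        (fun ℓ _ _ => hnn ℓ)
    have hconst : ∑ _ℓ ∈ S₀, ((p:ℝ)^2 * m * d^2 * K) =
        (L₀ : ℝ) * ((p:ℝ)^2 * m * d^2 * K) := by
      rw [Finset.sum_const, hcard, nsmul_eq_mul]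
    linarith
  -- final chain
  rw [hK]
  have hLHS : (4 * (L₀:ℝ) / L) * m * d ^ 2 * K =
      ((4:ℝ) / ((p:ℝ)^2 * L)) * ((L₀ : ℝ) * ((p:ℝ)^2 * m * d^2 * K)) := by
    field_simp
  rw [hLHS]
  have hc4 : (0:ℝ) ≤ (4:ℝ) / ((p:ℝ)^2 * L) := by positivity
  calc ((4:ℝ) / ((p:ℝ)^2 * L)) * ((L₀ : ℝ) * ((p:ℝ)^2 * m * d^2 * K))
      ≤ ((4:ℝ) / ((p:ℝ)^2 * L)) * ∑ ℓ, (A ℓ * Δ * (A ℓ * Δ)).trace :=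
        mul_le_mul_of_nonneg_left hsum hc4
    _ = ∑ i, ∑ j, (gradG p L n X y σ Om) i j * Δ i j := hS.symm
    _ ≤ frobNorm (gradG p L n X y σ Om) * frobNorm Δ := hCS
end

section
/- Let X be a random vector in ℝᵖ on a probability space such that for every unit vector v ∈ ℝᵖ and every λ ∈ ℝ, E[exp(λ·vᵀX)] ≤ exp(λ²σ²/2) (i.e., X is a mean-zero sub-Gaussian random vector with parameter σ > 0). Then for every t ≥ 0, P(‖X‖₂ ≥ t) ≤ 5ᵖ·exp(−t²/(8σ²)). -/
open Matrix MeasureTheory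

open Metric Finset
open scoped ENNReal RealInnerProductSpace

lemma packing_card_le {p : ℕ} (hp : 0 < p) (s : Finset (EuclideanSpace ℝ (Fin p)))
    (hs : ↑s ⊆ sphere (0 : EuclideanSpace ℝ (Fin p)) 1)
    (hsep : (s : Set (EuclideanSpace ℝ (Fin p))).Pairwise (fun x y => (1:ℝ)/2 ≤ dist x y)) :
    s.card ≤ 5 ^ p := by
  have hnt : Nontrivial (EuclideanSpace ℝ (Fin p)) :=
    ⟨⟨EuclideanSpace.single ⟨0, hp⟩ 1, 0, fun h => by
      have := congrArg (fun f => f ⟨0, hp⟩) h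
      simp [EuclideanSpace.single_apply] at this⟩⟩
  set c := volume (ball (0 : EuclideanSpace ℝ (Fin p)) 1) with hc
  have hdisj : (s : Set (EuclideanSpace ℝ (Fin p))).PairwiseDisjoint
      (fun v => ball v (4⁻¹ : ℝ)) := by
    intro x hx y hy hxy
    refine Set.disjoint_left.2 fun z hzx hzy => ?_
    have h1 := hsep hx hy hxy
    have : dist x y < 1/2 := by
      calc dist x y ≤ dist x z + dist z y := dist_triangle x z y
      _ < 4⁻¹ + 4⁻¹ := by
          rw [dist_comm x z]
          exact add_lt_add (mem_ball.1 hzx) (mem_ball.1 hzy)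
      _ = 1/2 := by norm_num
    linarith
  have hsub : (⋃ v ∈ s, ball v (4⁻¹:ℝ)) ⊆ ball (0 : EuclideanSpace ℝ (Fin p)) (5/4) := by
    intro x hx
    simp only [Set.mem_iUnion] at hx
    obtain ⟨v, hv, hxv⟩ := hx
    have hv1 : dist v 0 = 1 := mem_sphere.1 (hs hv)
    have : dist x (0 : EuclideanSpace ℝ (Fin p)) ≤ dist x v + dist v 0 := dist_triangle _ _ _
    rw [mem_ball]
    rw [mem_ball] at hxv
    linarith
  have key : ∑ v ∈ s, volume (ball v (4⁻¹:ℝ)) ≤ volume (ball (0 : EuclideanSpace ℝ (Fin p)) (5/4)) := by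
    rw [← measure_biUnion_finset hdisj (fun _ _ => measurableSet_ball)]
    exact measure_mono hsub
  have hball : ∀ v : EuclideanSpace ℝ (Fin p),
      volume (ball v (4⁻¹:ℝ)) = ENNReal.ofReal ((4⁻¹:ℝ) ^ p) * c := by
    intro v
    rw [Measure.addHaar_ball volume v (by norm_num : (0:ℝ) ≤ 4⁻¹), finrank_euclideanSpace_fin]
  have hball2 : volume (ball (0 : EuclideanSpace ℝ (Fin p)) (5/4)) =
      ENNReal.ofReal ((5:ℝ)^p) * (ENNReal.ofReal ((4⁻¹:ℝ) ^ p) * c) := by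
    rw [Measure.addHaar_ball volume _ (by norm_num : (0:ℝ) ≤ 5/4), finrank_euclideanSpace_fin,
      ← mul_assoc, ← ENNReal.ofReal_mul (by positivity), ← mul_pow]
    norm_num
    rfl
  rw [hball2] at key
  simp only [hball, Finset.sum_const, nsmul_eq_mul] at key
  have hc0 : ENNReal.ofReal ((4⁻¹:ℝ) ^ p) * c ≠ 0 := by
    refine mul_ne_zero ?_ ?_
    · simp [ENNReal.ofReal_eq_zero]
    · exact (measure_ball_pos volume _ one_pos).ne'
  have hct : ENNReal.ofReal ((4⁻¹:ℝ) ^ p) * c ≠ ⊤ :=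
    ENNReal.mul_ne_top ENNReal.ofReal_ne_top measure_ball_lt_top.ne
  have hcard : (s.card : ℝ≥0∞) ≤ ENNReal.ofReal ((5:ℝ)^p) :=
    (ENNReal.mul_le_mul_iff_left hc0 hct).1 key
  have : ENNReal.ofReal ((5:ℝ)^p) = ((5^p : ℕ) : ℝ≥0∞) := by
    rw [ENNReal.ofReal_pow (by norm_num)]
    simp
  rw [this] at hcard
  exact_mod_cast hcard

lemma net_exists (p : ℕ) : ∃ s : Finset (EuclideanSpace ℝ (Fin p)),
    ↑s ⊆ sphere (0 : EuclideanSpace ℝ (Fin p)) 1 ∧ s.card ≤ 5 ^ p ∧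
    ∀ u ∈ sphere (0 : EuclideanSpace ℝ (Fin p)) 1, ∃ v ∈ s, dist u v < 1/2 := by
  rcases Nat.eq_zero_or_pos p with hp | hp
  · refine ⟨∅, by simp, by simp, fun u hu => absurd (mem_sphere.1 hu) ?_⟩
    subst hp
    have : u = 0 := Subsingleton.elim u 0
    simp [this]
  · set S : Set (Set (EuclideanSpace ℝ (Fin p))) :=
      {A | A ⊆ sphere (0 : EuclideanSpace ℝ (Fin p)) 1 ∧
        A.Pairwise (fun x y => (1:ℝ)/2 ≤ dist x y)} with hS
    obtain ⟨M, hM⟩ : ∃ M, Maximal (· ∈ S) M := by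
      apply zorn_subset
      intro c hcS hchain
      refine ⟨⋃₀ c, ⟨?_, ?_⟩, fun A hA => Set.subset_sUnion_of_mem hA⟩
      · exact Set.sUnion_subset fun A hA => (hcS hA).1
      · intro x hx y hy hxy
        obtain ⟨A, hA, hxA⟩ := hx
        obtain ⟨B, hB, hyB⟩ := hy
        rcases hchain.total hA hB with h | h
        · exact (hcS hB).2 (h hxA) hyB hxy
        · exact (hcS hA).2 hxA (h hyB) hxy
    have hMsph := hM.1.1
    have hMsep := hM.1.2
    -- M is finite with card ≤ 5^p
    have hfin : M.Finite := by
      by_contra hinf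
      obtain ⟨t, hts, htcard⟩ := Set.Infinite.exists_subset_card_eq hinf (5^p+1)
      have := packing_card_le hp t (hts.trans hMsph) (hMsep.mono hts)
      omega
    refine ⟨hfin.toFinset, by simpa using hMsph, ?_, ?_⟩
    · have := packing_card_le hp hfin.toFinset (by simpa using hMsph)
        (by simpa using hMsep)
      exact this
    · intro u hu
      by_contra hno
      push_neg at hno
      have huM : u ∉ M := fun h => by
        have := hno u (hfin.mem_toFinset.2 h)
        norm_num [dist_self] at this
      have : insert u M ∈ S := by
        refine ⟨Set.insert_subset hu hMsph, ?_⟩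
        intro x hx y hy hxy
        rcases hx with rfl | hx
        · rcases hy with rfl | hy
          · exact absurd rfl hxy
          · exact hno y (hfin.mem_toFinset.2 hy)
        · rcases hy with rfl | hy
          · rw [dist_comm]
            exact hno x (hfin.mem_toFinset.2 hx)
          · exact hMsep hx hy hxy
      have := hM.2 this (Set.subset_insert u M)
      exact huM (this (Set.mem_insert u M))
lemma chernoff {W : Type*} [MeasurableSpace W] (μ : Measure W) [IsProbabilityMeasure μ]
    (Y : W → ℝ) (σ t : ℝ) (hσ : 0 < σ) (ht : 0 < t)
    (hint : Integrable (fun ω => Real.exp (t/(2*σ^2) * Y ω)) μ)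
    (hmgf : ∫ ω, Real.exp (t/(2*σ^2) * Y ω) ∂μ ≤ Real.exp ((t/(2*σ^2))^2 * σ^2/2)) :
    μ {ω | t/2 ≤ Y ω} ≤ ENNReal.ofReal (Real.exp (-t^2/(8*σ^2))) := by
  have hl : 0 < t/(2*σ^2) := by positivity
  have hmar := mul_meas_ge_le_integral_of_nonneg
    (Filter.Eventually.of_forall fun ω => (Real.exp_nonneg (t/(2*σ^2) * Y ω)))
    hint (Real.exp ((t/(2*σ^2)) * (t/2)))
  have hset : {x | Real.exp ((t/(2*σ^2)) * (t/2)) ≤ Real.exp (t/(2*σ^2) * Y x)}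
      = {ω | t/2 ≤ Y ω} := by
    ext x
    simp only [Set.mem_setOf_eq, Real.exp_le_exp]
    exact mul_le_mul_iff_right₀ hl
  rw [hset] at hmar
  have key : (μ {ω | t/2 ≤ Y ω}).toReal ≤
      Real.exp ((t/(2*σ^2))^2 * σ^2/2) / Real.exp ((t/(2*σ^2)) * (t/2)) := by
    rw [le_div_iff₀ (Real.exp_pos _), mul_comm]
    exact le_trans hmar hmgf
  have heq : Real.exp ((t/(2*σ^2))^2 * σ^2/2) / Real.exp ((t/(2*σ^2)) * (t/2))
      = Real.exp (-t^2/(8*σ^2)) := by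
    rw [← Real.exp_sub]
    congr 1
    have : σ^2 ≠ 0 := by positivity
    field_simp
    ring
  rw [heq] at key
  calc μ {ω | t/2 ≤ Y ω} = ENNReal.ofReal (μ {ω | t/2 ≤ Y ω}).toReal :=
        (ENNReal.ofReal_toReal (measure_ne_top μ _)).symm
    _ ≤ ENNReal.ofReal (Real.exp (-t^2/(8*σ^2))) := ENNReal.ofReal_le_ofReal key
/-- if `X` is a mean-zero sub-Gaussian random vector in `ℝᵖ` with parameter
`σ > 0` (its moment generating function along every unit direction `v` is finite and bounded by
`exp(λ²σ²/2)`), then for every `t ≥ 0`, `P(‖X‖₂ ≥ t) ≤ 5ᵖ·exp(−t²/(8σ²))`. -/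
theorem stmt_12
    {W : Type*} [MeasurableSpace W] (μ : Measure W) [IsProbabilityMeasure μ]
    (p : ℕ) (X : W → Fin p → ℝ) (hX : Measurable X)
    (σ : ℝ) (hσ : 0 < σ)
    (hint : ∀ v : Fin p → ℝ, ∑ i, v i ^ 2 = 1 → ∀ l : ℝ,
      Integrable (fun ω => Real.exp (l * (v ⬝ᵥ X ω))) μ)
    (hmgf : ∀ v : Fin p → ℝ, ∑ i, v i ^ 2 = 1 → ∀ l : ℝ,
      ∫ ω, Real.exp (l * (v ⬝ᵥ X ω)) ∂μ ≤ Real.exp (l ^ 2 * σ ^ 2 / 2)) :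
    ∀ t : ℝ, 0 ≤ t →
      μ {ω | t ≤ Real.sqrt (∑ i, X ω i ^ 2)} ≤
        ENNReal.ofReal ((5 : ℝ) ^ p * Real.exp (-t ^ 2 / (8 * σ ^ 2))) := by
  intro t ht
  rcases ht.eq_or_lt with rfl | htpos
  · calc μ {ω | (0:ℝ) ≤ Real.sqrt (∑ i, X ω i ^ 2)} ≤ 1 := prob_le_one
      _ ≤ ENNReal.ofReal ((5 : ℝ) ^ p * Real.exp (-(0:ℝ) ^ 2 / (8 * σ ^ 2))) := by
          rw [show (-(0:ℝ)^2 / (8 * σ^2)) = 0 by ring, Real.exp_zero, mul_one,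
            ENNReal.one_le_ofReal]
          exact one_le_pow₀ (by norm_num)
  obtain ⟨s, hssph, hscard, hsnet⟩ := net_exists p
  have hunit : ∀ v ∈ s, ∑ i, (fun i => v i) i ^ 2 = 1 := by
    intro v hv
    have h1 : ‖v‖ = 1 := mem_sphere_zero_iff_norm.1 (hssph hv)
    rw [EuclideanSpace.norm_eq] at h1
    have := Real.sqrt_eq_one.1 h1
    calc ∑ i, (fun i => v i) i ^ 2 = ∑ i, ‖v i‖ ^ 2 := by
          apply Finset.sum_congr rfl; intro i _; simp [Real.norm_eq_abs, sq_abs]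
      _ = 1 := this
  have hsubset : {ω | t ≤ Real.sqrt (∑ i, X ω i ^ 2)} ⊆
      ⋃ v ∈ s, {ω | t/2 ≤ (fun i => v i) ⬝ᵥ X ω} := by
    intro ω hω
    simp only [Set.mem_setOf_eq] at hω
    set x : EuclideanSpace ℝ (Fin p) := (WithLp.equiv 2 (Fin p → ℝ)).symm (X ω) with hx
    have hxnorm : ‖x‖ = Real.sqrt (∑ i, X ω i ^ 2) := by
      rw [EuclideanSpace.norm_eq]
      congr 1
      apply Finset.sum_congr rfl
      intro i _
      rw [hx]
      simp [PiLp.toLp_apply, Real.norm_eq_abs, sq_abs]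
    have hxt : t ≤ ‖x‖ := hxnorm ▸ hω
    have hxpos : 0 < ‖x‖ := lt_of_lt_of_le htpos hxt
    set u : EuclideanSpace ℝ (Fin p) := ‖x‖⁻¹ • x with hu
    have hunorm : ‖u‖ = 1 := by
      rw [hu, norm_smul, norm_inv, norm_norm, inv_mul_cancel₀ hxpos.ne']
    obtain ⟨v, hvs, hv⟩ := hsnet u (mem_sphere_zero_iff_norm.2 hunorm)
    simp only [Set.mem_iUnion, Set.mem_setOf_eq]
    refine ⟨v, hvs, ?_⟩
    have hip : (fun i => v i) ⬝ᵥ X ω = ⟪v, x⟫ := by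
      rw [dotProduct, PiLp.inner_apply]
      apply Finset.sum_congr rfl
      intro i _
      rw [hx]
      simp [PiLp.toLp_apply, RCLike.inner_apply, mul_comm]
    have h1 : ⟪u, x⟫ = ‖x‖ := by
      rw [hu, real_inner_smul_left, real_inner_self_eq_norm_sq, sq,
        inv_mul_cancel_left₀ hxpos.ne']
    have h2 : ⟪u - v, x⟫ ≤ (1/2) * ‖x‖ := by
      calc ⟪u - v, x⟫ ≤ ‖u - v‖ * ‖x‖ := real_inner_le_norm _ _
        _ ≤ (1/2) * ‖x‖ := by
            apply mul_le_mul_of_nonneg_right _ (norm_nonneg _)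
            rw [← dist_eq_norm]
            exact hv.le
    have h3 : ⟪u - v, x⟫ = ⟪u, x⟫ - ⟪v, x⟫ := inner_sub_left u v x
    rw [hip]
    have : ⟪v, x⟫ = ‖x‖ - ⟪u - v, x⟫ := by rw [h3, h1]; ring
    rw [this]
    linarith
  calc μ {ω | t ≤ Real.sqrt (∑ i, X ω i ^ 2)}
      ≤ μ (⋃ v ∈ s, {ω | t/2 ≤ (fun i => v i) ⬝ᵥ X ω}) := measure_mono hsubset
    _ ≤ ∑ v ∈ s, μ {ω | t/2 ≤ (fun i => v i) ⬝ᵥ X ω} := measure_biUnion_finset_le s _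
    _ ≤ ∑ _v ∈ s, ENNReal.ofReal (Real.exp (-t^2/(8*σ^2))) := by
        apply Finset.sum_le_sum
        intro v hv
        exact chernoff μ (fun ω => (fun i => v i) ⬝ᵥ X ω) σ t hσ htpos
          (hint _ (hunit v hv) _) (hmgf _ (hunit v hv) _)
    _ = (s.card : ℝ≥0∞) * ENNReal.ofReal (Real.exp (-t^2/(8*σ^2))) := by
        rw [Finset.sum_const, nsmul_eq_mul]
    _ ≤ ((5^p : ℕ) : ℝ≥0∞) * ENNReal.ofReal (Real.exp (-t^2/(8*σ^2))) := by
        exact mul_le_mul_left (by exact_mod_cast hscard) _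
    _ = ENNReal.ofReal ((5 : ℝ) ^ p * Real.exp (-t ^ 2 / (8 * σ ^ 2))) := by
        rw [ENNReal.ofReal_mul (by positivity)]
        congr 1
        rw [ENNReal.ofReal_pow (by norm_num)]
        simp
end
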